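/- arXiv:1510.01066 — 6 statements merged into one kernel-verified Lean document; each statement's English description precedes it below -/
import Mathlib

section
/- Let R satisfy the distributional equation R =_d q + M R with R and M independent, where q > 0 is a constant, P(0 ≤ M ≤ 1) = 1, and p := P(M = 1) ∈ (0,1). Then lim_{x→∞} (ln P(R > x))/x = (ln p)/q. -/
/-!
Iterating `R = q + M R`, the only way for `R` to be large is a long run of factors `M` close
to `1`. Lower bound: `n` factors equal to `1` shift the tail by `q n` at cost `p ^ n`.
Upper bound: `R > q n + s y` forces `M₁ ⋯ Mₙ > s` or `R' > y`, and Markov's inequality for the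
`t`-th moment bounds the first event by `(E Mᵗ) ^ n s⁻ᵗ`. Iterating along the thresholds
`x, 2x, 4x, …` gives `P(R > x) ≲ (E Mᵗ) ^ ((1 - 2 s) x / q)`, and `E Mᵗ → p` as `t → ∞`.
-/

open Filter Set MeasureTheory ProbabilityTheory
open scoped ENNReal Topology

lemma eventually_lt_log_div_of_mul_exp_le {G : ℝ → ℝ} {b β a : ℝ} (hb : 0 < b)
    (hG : ∀ᶠ x in atTop, b * Real.exp (β * x) ≤ G x) (ha : a < β) :
    ∀ᶠ x in atTop, a < Real.log (G x) / x := by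
  have hlim : Tendsto (fun x => Real.log b / x + β) atTop (𝓝 β) := by
    simpa using (tendsto_const_nhds.div_atTop tendsto_id).add_const β
  filter_upwards [hG, hlim.eventually_const_lt ha, eventually_gt_atTop 0] with x hx hax hx0
  calc a < Real.log b / x + β := hax
    _ = Real.log (b * Real.exp (β * x)) / x := by
      rw [Real.log_mul hb.ne' (Real.exp_pos _).ne', Real.log_exp]; field_simp
    _ ≤ Real.log (G x) / x := by gcongr

lemma eventually_log_div_lt_of_le_mul_exp {G : ℝ → ℝ} {K β a : ℝ} (hK : 0 < K)
    (hpos : ∀ᶠ x in atTop, 0 < G x) (hG : ∀ᶠ x in atTop, G x ≤ K * Real.exp (β * x))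
    (ha : β < a) :
    ∀ᶠ x in atTop, Real.log (G x) / x < a := by
  have hlim : Tendsto (fun x => Real.log K / x + β) atTop (𝓝 β) := by
    simpa using (tendsto_const_nhds.div_atTop tendsto_id).add_const β
  filter_upwards [hpos, hG, hlim.eventually_lt_const ha, eventually_gt_atTop 0]
    with x hx0 hx hax hxpos
  calc Real.log (G x) / x ≤ Real.log (K * Real.exp (β * x)) / x := by
        gcongr
    _ = Real.log K / x + β := by
      rw [Real.log_mul hK.ne' (Real.exp_pos _).ne', Real.log_exp]; field_simp
    _ < a := hax

lemma mul_exp_log_mul_le_pow_ceil {ρ u : ℝ} (hρ0 : 0 < ρ) (hρ1 : ρ ≤ 1) (hu : 0 ≤ u) :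
    ρ * Real.exp (Real.log ρ * u) ≤ ρ ^ ⌈u⌉₊ := by
  have hceil : (⌈u⌉₊ : ℝ) ≤ u + 1 := (Nat.ceil_lt_add_one hu).le
  have hlog : Real.log ρ ≤ 0 := Real.log_nonpos hρ0.le hρ1
  calc ρ * Real.exp (Real.log ρ * u) = Real.exp (Real.log ρ * (u + 1)) := by
        rw [mul_add, mul_one, Real.exp_add, Real.exp_log hρ0, mul_comm]
    _ ≤ Real.exp (Real.log ρ * ⌈u⌉₊) := Real.exp_le_exp.2 (mul_le_mul_of_nonpos_left hceil hlog)
    _ = ρ ^ ⌈u⌉₊ := by rw [← Real.rpow_natCast, Real.rpow_def_of_pos hρ0]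

lemma pow_floor_le_inv_mul_exp_log_mul {ρ u : ℝ} (hρ0 : 0 < ρ) (hρ1 : ρ ≤ 1) :
    ρ ^ ⌊u⌋₊ ≤ ρ⁻¹ * Real.exp (Real.log ρ * u) := by
  have hfloor : u - 1 ≤ (⌊u⌋₊ : ℝ) := (Nat.sub_one_lt_floor u).le
  have hlog : Real.log ρ ≤ 0 := Real.log_nonpos hρ0.le hρ1
  calc ρ ^ ⌊u⌋₊ = Real.exp (Real.log ρ * ⌊u⌋₊) := by
        rw [← Real.rpow_natCast, Real.rpow_def_of_pos hρ0]
    _ ≤ Real.exp (Real.log ρ * (u - 1)) :=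
      Real.exp_le_exp.2 (mul_le_mul_of_nonpos_left hfloor hlog)
    _ = ρ⁻¹ * Real.exp (Real.log ρ * u) := by
      rw [mul_sub, mul_one, Real.exp_sub, Real.exp_log hρ0, div_eq_inv_mul]

lemma le_tsum_of_le_add_succ {u a : ℕ → ℝ≥0∞} (h : ∀ j, u j ≤ a j + u (j + 1))
    (hu : Tendsto u atTop (𝓝 0)) : u 0 ≤ ∑' j, a j := by
  have hpartial : ∀ J, u 0 ≤ ∑ j ∈ Finset.range J, a j + u J := by
    intro J
    induction J with
    | zero => simp
    | succ J ih =>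
      calc u 0 ≤ ∑ j ∈ Finset.range J, a j + u J := ih
        _ ≤ ∑ j ∈ Finset.range J, a j + (a J + u (J + 1)) := by gcongr; exact h J
        _ = ∑ j ∈ Finset.range (J + 1), a j + u (J + 1) := by
          rw [Finset.sum_range_succ, add_assoc]
  have hlim : Tendsto (fun J => ∑' j, a j + u J) atTop (𝓝 (∑' j, a j)) := by
    simpa using tendsto_const_nhds.add hu
  exact ge_of_tendsto' hlim fun J => (hpartial J).trans (by gcongr; exact ENNReal.sum_le_tsum _)

lemma tendsto_measure_Ioi_atTop (ν : Measure ℝ) [IsFiniteMeasure ν] :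
    Tendsto (fun x => ν (Ioi x)) atTop (𝓝 0) := by
  have hempty : ⋂ x : ℝ, Ioi x = ∅ := iInter_eq_empty_iff.2 fun r => ⟨r, lt_irrefl r⟩
  simpa [hempty, Function.comp_def] using tendsto_measure_iInter_atTop (μ := ν)
    (fun x => measurableSet_Ioi.nullMeasurableSet) (fun _ _ h => Ioi_subset_Ioi h)
    ⟨0, measure_ne_top ν _⟩

noncomputable def lmoment (μ : Measure ℝ) (t : ℕ) : ℝ≥0∞ := ∫⁻ m, ENNReal.ofReal m ^ t ∂μ

lemma measurable_ofReal_pow (t : ℕ) : Measurable fun m : ℝ => ENNReal.ofReal m ^ t :=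
  ENNReal.measurable_ofReal.pow_const t

lemma mul_measure_singleton_le_lintegral (μ : Measure ℝ) (f : ℝ → ℝ≥0∞) (a : ℝ) :
    f a * μ {a} ≤ ∫⁻ m, f m ∂μ := by
  rw [← lintegral_singleton]
  exact setLIntegral_le_lintegral _ _

lemma measure_singleton_one_le_lmoment (μ : Measure ℝ) (t : ℕ) : μ {1} ≤ lmoment μ t := by
  simpa [lmoment] using mul_measure_singleton_le_lintegral μ (fun m => ENNReal.ofReal m ^ t) 1

lemma tendsto_lmoment {μ : Measure ℝ} [IsFiniteMeasure μ] (hμ : ∀ᵐ m ∂μ, m ≤ 1) :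
    Tendsto (lmoment μ) atTop (𝓝 (μ {1})) := by
  have hlim : ∀ᵐ m ∂μ, Tendsto (fun t => ENNReal.ofReal m ^ t) atTop
      (𝓝 (({1} : Set ℝ).indicator 1 m)) := by
    filter_upwards [hμ] with m hm
    rcases hm.eq_or_lt with rfl | hlt
    · simp
    · rw [indicator_of_notMem (by simpa using hlt.ne)]
      exact ENNReal.tendsto_pow_atTop_nhds_zero_of_lt_one (ENNReal.ofReal_lt_one.2 hlt)
  have := tendsto_lintegral_of_dominated_convergence (fun _ => 1)
    (fun t => measurable_ofReal_pow t)
    (fun t => hμ.mono fun m hm => pow_le_one' (ENNReal.ofReal_le_one.2 hm) t)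
    (by simp) hlim
  rwa [lintegral_indicator_one (measurableSet_singleton 1)] at this

lemma measure_Ioi_add_eq_lintegral {μ ν : Measure ℝ} [SFinite ν] {q : ℝ}
    (hfix : (μ.prod ν).map (fun z => q + z.1 * z.2) = ν) (x : ℝ) :
    ν (Ioi (x + q)) = ∫⁻ m, ν {r | x < m * r} ∂μ := by
  have hs : MeasurableSet {z : ℝ × ℝ | x < z.1 * z.2} :=
    measurableSet_lt measurable_const (by fun_prop)
  conv_lhs => rw [← hfix]
  have hpre : (fun z : ℝ × ℝ => q + z.1 * z.2) ⁻¹' Ioi (x + q) = {z | x < z.1 * z.2} := by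
    ext z
    simp [add_comm x q]
  rw [Measure.map_apply (by fun_prop) measurableSet_Ioi, hpre, Measure.prod_apply hs]
  rfl

section TailRecursion

variable {μ ν : Measure ℝ} {q : ℝ}

lemma pow_measure_singleton_one_mul_le
    (hrec : ∀ x, ν (Ioi (x + q)) = ∫⁻ m, ν {r | x < m * r} ∂μ) (x : ℝ) (n : ℕ) :
    μ {1} ^ n * ν (Ioi x) ≤ ν (Ioi (q * n + x)) := by
  induction n with
  | zero => simp
  | succ n ih =>
    calc μ {1} ^ (n + 1) * ν (Ioi x) = μ {1} ^ n * ν (Ioi x) * μ {1} := by ring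
      _ ≤ ν {r | q * n + x < 1 * r} * μ {1} := by simp only [one_mul]; exact mul_le_mul_left ih _
      _ ≤ ∫⁻ m, ν {r | q * n + x < m * r} ∂μ := mul_measure_singleton_le_lintegral μ _ 1
      _ = ν (Ioi (q * (n + 1 : ℕ) + x)) := by rw [← hrec]; push_cast; ring_nf

-- `ν (Ioi (q * n + s * y))` is `P(q + q M₁ + ⋯ + q M₁⋯Mₙ₋₁ + M₁⋯Mₙ R' > q n + s y)`, which
-- needs `M₁⋯Mₙ > s` or `R' > y`.
lemma measure_Ioi_le_lmoment_pow_add [IsProbabilityMeasure μ] [IsProbabilityMeasure ν]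
    (hq : 0 ≤ q) (hrec : ∀ x, ν (Ioi (x + q)) = ∫⁻ m, ν {r | x < m * r} ∂μ)
    (hμ : ∀ᵐ m ∂μ, m ∈ Icc (0 : ℝ) 1) (t n : ℕ) {s y : ℝ} (hs : 0 < s) (hy : 0 < y) :
    ν (Ioi (q * n + s * y)) ≤ lmoment μ t ^ n * ENNReal.ofReal s⁻¹ ^ t + ν (Ioi y) := by
  induction n generalizing s with
  | zero =>
    rcases le_or_gt 1 s with h1 | h1
    · simpa using le_add_left (measure_mono (Ioi_subset_Ioi (le_mul_of_one_le_left hy.le h1)))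
    · have hK : 1 ≤ ENNReal.ofReal s⁻¹ ^ t :=
        one_le_pow₀ (ENNReal.one_le_ofReal.2 (one_le_inv₀ hs |>.2 h1.le))
      simpa using le_add_right (prob_le_one.trans hK)
  | succ n ih =>
    set K := lmoment μ t ^ n * ENNReal.ofReal s⁻¹ ^ t
    have hslice : ∀ᵐ m ∂μ,
        ν {r | q * n + s * y < m * r} ≤ K * ENNReal.ofReal m ^ t + ν (Ioi y) := by
      filter_upwards [hμ] with m ⟨hm0, hm1⟩
      rcases hm0.eq_or_lt with rfl | hm0
      · have : ¬ q * n + s * y < 0 := not_lt.2 (by positivity)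
        simp [this]
      have hsub : {r | q * n + s * y < m * r} ⊆ Ioi (q * n + s / m * y) := fun r hr => by
        have : m * (q * n + s / m * y) ≤ q * n + s * y := calc
          m * (q * n + s / m * y) = m * (q * n) + s * y := by field_simp
          _ ≤ q * n + s * y := add_le_add_left (mul_le_of_le_one_left (by positivity) hm1) _
        exact (mul_lt_mul_iff_right₀ hm0).1 (this.trans_lt hr)
      calc ν {r | q * n + s * y < m * r} ≤ ν (Ioi (q * n + s / m * y)) := measure_mono hsub
        _ ≤ lmoment μ t ^ n * ENNReal.ofReal (s / m)⁻¹ ^ t + ν (Ioi y) := ih (by positivity)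
        _ = K * ENNReal.ofReal m ^ t + ν (Ioi y) := by
          rw [inv_div, div_eq_mul_inv, ENNReal.ofReal_mul hm0.le, mul_pow]; ring
    calc ν (Ioi (q * (n + 1 : ℕ) + s * y)) = ∫⁻ m, ν {r | q * n + s * y < m * r} ∂μ := by
          rw [← hrec]; push_cast; ring_nf
      _ ≤ ∫⁻ m, (K * ENNReal.ofReal m ^ t + ν (Ioi y)) ∂μ := lintegral_mono_ae hslice
      _ = lmoment μ t ^ (n + 1) * ENNReal.ofReal s⁻¹ ^ t + ν (Ioi y) := by
          rw [lintegral_add_right _ measurable_const,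
            lintegral_const_mul _ (measurable_ofReal_pow t),
            lintegral_const, measure_univ, mul_one]
          change K * lmoment μ t + _ = _
          ring

lemma measure_Ioi_le_geometric [IsProbabilityMeasure μ] [IsProbabilityMeasure ν]
    (hq : 0 ≤ q) (hrec : ∀ x, ν (Ioi (x + q)) = ∫⁻ m, ν {r | x < m * r} ∂μ)
    (hμ : ∀ᵐ m ∂μ, m ∈ Icc (0 : ℝ) 1) (t N : ℕ) {s x : ℝ} (hs : 0 < s) (hx : 0 < x)
    (hN : q * N ≤ (1 - 2 * s) * x) (hqx : q ≤ (1 - 2 * s) * x) :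
    ν (Ioi x) ≤ ENNReal.ofReal s⁻¹ ^ t * (1 - lmoment μ t)⁻¹ * lmoment μ t ^ N := by
  set c := lmoment μ t
  set K := ENNReal.ofReal s⁻¹ ^ t
  have hstep : ∀ j : ℕ, ν (Ioi (2 ^ j * x)) ≤ c ^ (N + j) * K + ν (Ioi (2 ^ (j + 1) * x)) := by
    intro j
    have h2j : (j + 1 : ℝ) ≤ 2 ^ j := by exact_mod_cast Nat.lt_two_pow_self (n := j)
    have hw : 0 ≤ (1 - 2 * s) * x := hq.trans hqx
    have hthr : q * (N + j : ℕ) + s * (2 ^ (j + 1) * x) ≤ 2 ^ j * x := by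
      have hqj : q * j ≤ j * ((1 - 2 * s) * x) := by
        rw [mul_comm]; exact mul_le_mul_of_nonneg_left hqx j.cast_nonneg
      push_cast
      rw [pow_succ]
      nlinarith [mul_le_mul_of_nonneg_right h2j hw]
    calc ν (Ioi (2 ^ j * x)) ≤ ν (Ioi (q * (N + j : ℕ) + s * (2 ^ (j + 1) * x))) :=
          measure_mono (Ioi_subset_Ioi hthr)
      _ ≤ c ^ (N + j) * K + ν (Ioi (2 ^ (j + 1) * x)) :=
          measure_Ioi_le_lmoment_pow_add hq hrec hμ t (N + j) hs (by positivity)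
  have hlim : Tendsto (fun j : ℕ => ν (Ioi (2 ^ j * x))) atTop (𝓝 0) :=
    (tendsto_measure_Ioi_atTop ν).comp
      ((tendsto_pow_atTop_atTop_of_one_lt one_lt_two).atTop_mul_const hx)
  calc ν (Ioi x) ≤ ∑' j, c ^ (N + j) * K := by
        simpa using le_tsum_of_le_add_succ hstep hlim
    _ = K * (1 - c)⁻¹ * c ^ N := by
        simp_rw [pow_add]
        rw [ENNReal.tsum_mul_right, ENNReal.tsum_mul_left, ENNReal.tsum_geometric]
        ring

lemma exists_eventually_mul_exp_le_measure_Ioi [IsProbabilityMeasure μ] [IsProbabilityMeasure ν]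
    (hq : 0 < q) (hrec : ∀ x, ν (Ioi (x + q)) = ∫⁻ m, ν {r | x < m * r} ∂μ)
    (hp0 : μ {1} ≠ 0) :
    ∃ b > 0, ∀ᶠ x in atTop,
      b * Real.exp (Real.log (μ {1}).toReal / q * x) ≤ (ν (Ioi x)).toReal := by
  obtain ⟨x₁, hx₁⟩ := ((tendsto_measure_Ici_atBot ν).eventually_ne
    (measure_univ (μ := ν) ▸ one_ne_zero)).exists
  set x₀ := x₁ - 1
  have hB : 0 < (ν (Ioi x₀)).toReal := ENNReal.toReal_pos
    (fun h => hx₁ (measure_mono_null (Ici_subset_Ioi.2 (by simp [x₀])) h)) (measure_ne_top _ _)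
  set ρ := (μ {1}).toReal
  have hρ0 : 0 < ρ := ENNReal.toReal_pos hp0 (measure_ne_top _ _)
  have hρ1 : ρ ≤ 1 := ENNReal.toReal_le_of_le_ofReal zero_le_one (by simpa using prob_le_one)
  refine ⟨ρ * Real.exp (-(Real.log ρ / q * x₀)) * (ν (Ioi x₀)).toReal, by positivity, ?_⟩
  filter_upwards [eventually_ge_atTop x₀] with x hx
  set n := ⌈(x - x₀) / q⌉₊
  have hn : x ≤ q * n + x₀ := by
    have := Nat.le_ceil ((x - x₀) / q)
    rw [div_le_iff₀ hq] at this
    linarith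
  have hpow := mul_exp_log_mul_le_pow_ceil hρ0 hρ1 (div_nonneg (sub_nonneg.2 hx) hq.le)
  calc ρ * Real.exp (-(Real.log ρ / q * x₀)) * (ν (Ioi x₀)).toReal * Real.exp (Real.log ρ / q * x)
      = ρ * Real.exp (Real.log ρ * ((x - x₀) / q)) * (ν (Ioi x₀)).toReal := by
        rw [mul_right_comm, mul_assoc ρ, ← Real.exp_add]; ring_nf
    _ ≤ ρ ^ n * (ν (Ioi x₀)).toReal := by gcongr
    _ = (μ {1} ^ n * ν (Ioi x₀)).toReal := by simp [ρ, ENNReal.toReal_mul, ENNReal.toReal_pow]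
    _ ≤ (ν (Ioi (q * n + x₀))).toReal :=
        ENNReal.toReal_mono (measure_ne_top _ _) (pow_measure_singleton_one_mul_le hrec x₀ n)
    _ ≤ (ν (Ioi x)).toReal :=
        ENNReal.toReal_mono (measure_ne_top _ _) (measure_mono (Ioi_subset_Ioi hn))

lemma exists_eventually_measure_Ioi_le_mul_exp [IsProbabilityMeasure μ] [IsProbabilityMeasure ν]
    (hq : 0 < q) (hrec : ∀ x, ν (Ioi (x + q)) = ∫⁻ m, ν {r | x < m * r} ∂μ)
    (hμ : ∀ᵐ m ∂μ, m ∈ Icc (0 : ℝ) 1) {t : ℕ} (hc0 : lmoment μ t ≠ 0) (hc1 : lmoment μ t < 1)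
    {s : ℝ} (hs0 : 0 < s) (hs1 : 2 * s < 1) :
    ∃ K > 0, ∀ᶠ x in atTop, (ν (Ioi x)).toReal ≤
      K * Real.exp ((1 - 2 * s) * Real.log (lmoment μ t).toReal / q * x) := by
  set c := lmoment μ t
  set ρ := c.toReal
  have hρ0 : 0 < ρ := ENNReal.toReal_pos hc0 hc1.ne_top
  have hρ1 : ρ < 1 := ENNReal.toReal_lt_of_lt_ofReal (by simpa using hc1)
  refine ⟨(s⁻¹) ^ t * (1 - ρ)⁻¹ * ρ⁻¹, by have := sub_pos.2 hρ1; positivity, ?_⟩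
  filter_upwards [eventually_ge_atTop (q / (1 - 2 * s))] with x hx
  have hs : 0 < 1 - 2 * s := sub_pos.2 hs1
  have hqx : q ≤ (1 - 2 * s) * x := by rwa [div_le_iff₀' hs] at hx
  have hx0 : 0 < x := (div_pos hq hs).trans_le hx
  set u := (1 - 2 * s) * x / q
  have hN : q * ⌊u⌋₊ ≤ (1 - 2 * s) * x := by
    have := Nat.floor_le (show 0 ≤ u by positivity)
    rwa [le_div_iff₀' hq] at this
  have hbound := measure_Ioi_le_geometric hq.le hrec hμ t ⌊u⌋₊ hs0 hx0 hN hqx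
  have hfin : ENNReal.ofReal s⁻¹ ^ t * (1 - c)⁻¹ * c ^ ⌊u⌋₊ ≠ ∞ := by
    have : (1 - c)⁻¹ ≠ ∞ := ENNReal.inv_ne_top.2 (tsub_pos_of_lt hc1).ne'
    finiteness
  calc (ν (Ioi x)).toReal ≤ (ENNReal.ofReal s⁻¹ ^ t * (1 - c)⁻¹ * c ^ ⌊u⌋₊).toReal :=
        ENNReal.toReal_mono hfin hbound
    _ = (s⁻¹) ^ t * (1 - ρ)⁻¹ * ρ ^ ⌊u⌋₊ := by
        simp [ρ, ENNReal.toReal_mul, ENNReal.toReal_pow, ENNReal.toReal_inv,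
          ENNReal.toReal_sub_of_le hc1.le, hs0.le]
    _ ≤ (s⁻¹) ^ t * (1 - ρ)⁻¹ * (ρ⁻¹ * Real.exp (Real.log ρ * u)) := by
        have := sub_pos.2 hρ1
        gcongr
        exact pow_floor_le_inv_mul_exp_log_mul hρ0 hρ1.le
    _ = (s⁻¹) ^ t * (1 - ρ)⁻¹ * ρ⁻¹ * Real.exp ((1 - 2 * s) * Real.log ρ / q * x) := by
        simp only [u]; ring_nf

end TailRecursion

theorem tendsto_log_measure_Ioi_div {μ ν : Measure ℝ} [IsProbabilityMeasure μ]
    [IsProbabilityMeasure ν] {q : ℝ} (hq : 0 < q)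
    (hfix : (μ.prod ν).map (fun z => q + z.1 * z.2) = ν)
    (hμ : ∀ᵐ m ∂μ, m ∈ Icc (0 : ℝ) 1) (hp0 : μ {1} ≠ 0) (hp1 : μ {1} < 1) :
    Tendsto (fun x => Real.log (ν (Ioi x)).toReal / x) atTop
      (𝓝 (Real.log (μ {1}).toReal / q)) := by
  have hrec := measure_Ioi_add_eq_lintegral hfix
  obtain ⟨b, hb, hlow⟩ := exists_eventually_mul_exp_le_measure_Ioi hq hrec hp0
  refine tendsto_order.2 ⟨fun a ha => eventually_lt_log_div_of_mul_exp_le hb hlow ha,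
    fun a ha => ?_⟩
  have hpos : ∀ᶠ x in atTop, 0 < (ν (Ioi x)).toReal :=
    hlow.mono fun x hx => (by positivity : 0 < b * Real.exp _).trans_le hx
  have hmom := tendsto_lmoment (hμ.mono fun _ hm => hm.2)
  have hlog : Tendsto (fun t => Real.log (lmoment μ t).toReal / q) atTop
      (𝓝 (Real.log (μ {1}).toReal / q)) :=
    (((Real.continuousAt_log (ENNReal.toReal_pos hp0 (measure_ne_top _ _)).ne').tendsto.comp
      ((ENNReal.tendsto_toReal (measure_ne_top _ _)).comp hmom)).div_const q)
  obtain ⟨t, hta, htc⟩ := ((hlog.eventually_lt_const ha).and (hmom.eventually_lt_const hp1)).exists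
  set L := Real.log (lmoment μ t).toReal
  have hs : Tendsto (fun s : ℝ => (1 - 2 * s) * L / q) (𝓝[>] 0) (𝓝 (L / q)) := by
    refine tendsto_nhdsWithin_of_tendsto_nhds ?_
    simpa using ((by fun_prop : Continuous fun s : ℝ => (1 - 2 * s) * L / q).tendsto 0)
  obtain ⟨s, hsa, hs0, hs1⟩ := ((hs.eventually_lt_const hta).and
    (Ioo_mem_nhdsGT (by norm_num : (0 : ℝ) < 1 / 2))).exists
  obtain ⟨K, hK, hup⟩ := exists_eventually_measure_Ioi_le_mul_exp hq hrec hμ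
    ((measure_singleton_one_le_lmoment μ t).trans_lt' (pos_iff_ne_zero.2 hp0)).ne' htc hs0
    (by linarith)
  exact eventually_log_div_lt_of_le_mul_exp hK hpos hup hsa

/-- If `R =_d q + M R` with `R, M` independent, `q > 0`, `P(0 ≤ M ≤ 1) = 1` and
`p = P(M = 1) ∈ (0,1)`, then `ln P(R > x) / x → (ln p)/q`. -/
theorem stmt_4 {Ω : Type*} [MeasureSpace Ω] [IsProbabilityMeasure (ℙ : Measure Ω)]
    (R M : Ω → ℝ) (hR : Measurable R) (hM : Measurable M)
    (hindep : IndepFun M R ℙ)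
    (q : ℝ) (hq : 0 < q)
    (heq : Measure.map R ℙ = Measure.map (fun ω => q + M ω * R ω) ℙ)
    (hM01 : ℙ {ω | M ω ∈ Set.Icc (0 : ℝ) 1} = 1)
    (p : ℝ) (hp : p = (ℙ {ω | M ω = 1}).toReal) (hp0 : 0 < p) (hp1 : p < 1) :
    Tendsto (fun x => Real.log ((ℙ {ω | R ω > x}).toReal) / x) atTop
      (nhds (Real.log p / q)) := by
  set μ := Measure.map M ℙ
  set ν := Measure.map R ℙ
  have : IsProbabilityMeasure μ := Measure.isProbabilityMeasure_map hM.aemeasurable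
  have : IsProbabilityMeasure ν := Measure.isProbabilityMeasure_map hR.aemeasurable
  have hfix : (μ.prod ν).map (fun z => q + z.1 * z.2) = ν := by
    rw [← (indepFun_iff_map_prod_eq_prod_map_map hM.aemeasurable hR.aemeasurable).1 hindep,
      Measure.map_map (by fun_prop) (hM.prodMk hR)]
    exact heq.symm
  have hμ : ∀ᵐ m ∂μ, m ∈ Icc (0 : ℝ) 1 :=
    (ae_map_iff hM.aemeasurable measurableSet_Icc).2
      ((ae_iff_prob_eq_one (measurable_mem.2 measurableSet_Icc |>.comp hM)).2 hM01)
  have hμ1 : μ {1} = ENNReal.ofReal p := by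
    rw [hp, Measure.map_apply hM (measurableSet_singleton 1),
      ENNReal.ofReal_toReal (measure_ne_top _ _)]
    rfl
  have htail : ∀ x, ℙ {ω | R ω > x} = ν (Ioi x) := fun x =>
    (Measure.map_apply hR measurableSet_Ioi).symm
  have := tendsto_log_measure_Ioi_div hq hfix hμ (by simp [hμ1, hp0]) (by simp [hμ1, hp1])
  simpa [htail, hμ1, hp0.le] using this
end

section
/- Let M₁, M₂, … be i.i.d. random variables with values in [0,1], q > 0, and let R = q·Σ_{j=1}^∞ Π_{k=1}^{j−1} M_k (assume the series converges a.s.). Let (δ_n)_{n≥1} ⊂ (0,1) and define x₀ = q, x_n = q + (1 − δ_n) x_{n−1}. Then for every n ≥ 1, P(R > x_n) ≥ Π_{i=1}^n P(M > 1 − δ_i). -/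
open Filter Set MeasureTheory ProbabilityTheory

/-!
Unrolling `x_n = q + (1 - δ_n) x_{n-1}` pairs `M_0` with `δ_n`, `M_1` with `δ_{n-1}`, and so on.
On the event that `M_k > 1 - δ_{n-k}` for every `k < n`, the partial sum
`q Σ_{j ≤ n} Π_{k<j} M_k` therefore already exceeds `x_n`, and it is at most `R` because all
terms are nonnegative. By independence and identical distribution that event has probability
`Π_{i=1}^n P(M > 1 - δ_i)`.
-/

theorem Finset.prod_range_sub_eq_prod_Icc {β : Type*} [CommMonoid β] (f : ℕ → β) (n : ℕ) :
    ∏ k ∈ range n, f (n - k) = ∏ i ∈ Icc 1 n, f i := by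
  rw [← prod_range_reflect, ← Ico_add_one_right_eq_Icc, prod_Ico_eq_prod_range,
    Nat.add_sub_cancel]
  refine prod_congr rfl fun k hk => ?_
  rw [Finset.mem_range] at hk
  congr 1
  omega

def perpetuitySum (a : ℕ → ℝ) (n : ℕ) : ℝ :=
  ∑ j ∈ Finset.range n, ∏ k ∈ Finset.range j, a k

theorem perpetuitySum_succ (a : ℕ → ℝ) (n : ℕ) :
    perpetuitySum a (n + 1) = 1 + a 0 * perpetuitySum (fun k => a (k + 1)) n := by
  simp only [perpetuitySum, Finset.sum_range_succ', Finset.prod_range_succ',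
    Finset.prod_range_zero, Finset.mul_sum]
  rw [add_comm]
  congr 1
  exact Finset.sum_congr rfl fun j _ => mul_comm _ _

theorem perpetuitySum_le_tsum {a : ℕ → ℝ} (ha : ∀ k, 0 ≤ a k)
    (hsum : Summable fun j => ∏ k ∈ Finset.range j, a k) (n : ℕ) :
    perpetuitySum a n ≤ ∑' j, ∏ k ∈ Finset.range j, a k :=
  hsum.sum_le_tsum _ fun _ _ => Finset.prod_nonneg fun k _ => ha k

section Recursion

variable {q : ℝ} {c x : ℕ → ℝ} (hq : 0 < q) (hc : ∀ n, 0 ≤ c n) (hx0 : x 0 = q)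
  (hxn : ∀ n, x (n + 1) = q + c (n + 1) * x n)
include hq hc hx0 hxn

theorem recursion_pos (n : ℕ) : 0 < x n := by
  induction n with
  | zero => rwa [hx0]
  | succ n ih => rw [hxn]; nlinarith [hc (n + 1)]

theorem recursion_le_mul_perpetuitySum (n : ℕ) {a : ℕ → ℝ} (ha : ∀ k, 0 ≤ a k)
    (hca : ∀ k < n, c (n - k) ≤ a k) : x n ≤ q * perpetuitySum a (n + 1) := by
  induction n generalizing a with
  | zero => simp [perpetuitySum, hx0]
  | succ n ih =>
    have htail : x n ≤ q * perpetuitySum (fun k => a (k + 1)) (n + 1) :=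
      ih (fun k => ha (k + 1)) fun k hk => by simpa using hca (k + 1) (by omega)
    have hhead : c (n + 1) ≤ a 0 := by simpa using hca 0 (by omega)
    rw [hxn, perpetuitySum_succ, mul_add, mul_one, mul_left_comm]
    gcongr
    · exact (recursion_pos hq hc hx0 hxn n).le
    · exact ha 0

theorem recursion_lt_mul_perpetuitySum (n : ℕ) {a : ℕ → ℝ} (ha : ∀ k, 0 ≤ a k)
    (hca : ∀ k < n + 1, c (n + 1 - k) < a k) : x (n + 1) < q * perpetuitySum a (n + 2) := by
  have htail : x n ≤ q * perpetuitySum (fun k => a (k + 1)) (n + 1) :=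
    recursion_le_mul_perpetuitySum hq hc hx0 hxn n (fun k => ha (k + 1))
      fun k hk => by simpa using (hca (k + 1) (by omega)).le
  have hhead : c (n + 1) < a 0 := by simpa using hca 0 (by omega)
  rw [hxn, perpetuitySum_succ, mul_add, mul_one, mul_left_comm]
  gcongr q + ?_
  calc c (n + 1) * x n < a 0 * x n := by gcongr; exact recursion_pos hq hc hx0 hxn n
    _ ≤ a 0 * (q * perpetuitySum (fun k => a (k + 1)) (n + 1)) := by gcongr; exact ha 0

end Recursion

theorem measure_forall_lt_eq_prod {Ω : Type*} [MeasurableSpace Ω] {μ : Measure Ω}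
    {M : ℕ → Ω → ℝ} (hindep : iIndepFun M μ) (hident : ∀ i, IdentDistrib (M i) (M 0) μ μ)
    (t : ℕ → ℝ) (n : ℕ) :
    μ {ω | ∀ k < n, t (n - k) < M k ω} = ∏ i ∈ Finset.Icc 1 n, μ {ω | t i < M i ω} := by
  have hmeas_eq : ∀ i j s, μ {ω | s < M i ω} = μ {ω | s < M j ω} := fun i j s =>
    ((hident i).measure_mem_eq measurableSet_Ioi).trans
      ((hident j).measure_mem_eq measurableSet_Ioi).symm
  have hinter : {ω | ∀ k < n, t (n - k) < M k ω} =
      ⋂ k ∈ Finset.range n, M k ⁻¹' Ioi (t (n - k)) := by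
    ext ω; simp
  rw [hinter, hindep.meas_biInter fun k _ => ⟨Ioi (t (n - k)), measurableSet_Ioi, rfl⟩,
    ← Finset.prod_range_sub_eq_prod_Icc]
  exact Finset.prod_congr rfl fun k _ => hmeas_eq k (n - k) _

/-- Lower-bound recursion: for i.i.d. `M_k` with values in `[0,1]`,
`R = q Σ_j Π_{k<j} M_k`, `x₀ = q`, `x_n = q + (1−δ_n) x_{n−1}` with `δ_n ∈ (0,1)`,
we have `P(R > x_n) ≥ Π_{i=1}^n P(M_i > 1 − δ_i)`. -/
theorem stmt_5 {Ω : Type*} [MeasureSpace Ω] [IsProbabilityMeasure (ℙ : Measure Ω)]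
    (M : ℕ → Ω → ℝ) (hMmeas : ∀ i, Measurable (M i))
    (hindep : iIndepFun M ℙ)
    (hident : ∀ i, IdentDistrib (M i) (M 0) ℙ ℙ)
    (hM01 : ∀ i, ℙ {ω | M i ω ∈ Set.Icc (0 : ℝ) 1} = 1)
    (q : ℝ) (hq : 0 < q)
    (hconv : ∀ᵐ ω ∂ℙ, Summable (fun j => ∏ k ∈ Finset.range j, M k ω))
    (R : Ω → ℝ) (hRdef : ∀ ω, R ω = q * ∑' j : ℕ, ∏ k ∈ Finset.range j, M k ω)
    (δ : ℕ → ℝ) (hδ : ∀ n, δ n ∈ Set.Ioo (0 : ℝ) 1)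
    (x : ℕ → ℝ) (hx0 : x 0 = q) (hxn : ∀ n, x (n + 1) = q + (1 - δ (n + 1)) * x n) :
    ∀ n ≥ 1, (ℙ {ω | R ω > x n}).toReal ≥
      ∏ i ∈ Finset.Icc 1 n, (ℙ {ω | M i ω > 1 - δ i}).toReal := by
  intro m hm
  obtain ⟨n, rfl⟩ : ∃ n, m = n + 1 := ⟨m - 1, by omega⟩
  have hnonneg : ∀ᵐ ω ∂ℙ, ∀ i, 0 ≤ M i ω := ae_all_iff.2 fun i => by
    filter_upwards [(ae_iff_measure_eq ((hMmeas i) measurableSet_Icc).nullMeasurableSet).2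
      (by rw [hM01, measure_univ])] with ω hω using hω.1
  have hsub : {ω | ∀ k < n + 1, 1 - δ (n + 1 - k) < M k ω} ≤ᵐ[ℙ] {ω | R ω > x (n + 1)} := by
    filter_upwards [hnonneg, hconv] with ω hω hsum hgood
    calc x (n + 1) < q * perpetuitySum (fun k => M k ω) (n + 2) :=
          recursion_lt_mul_perpetuitySum hq (fun i => sub_nonneg.2 (hδ i).2.le) hx0 hxn n hω hgood
      _ ≤ R ω := by rw [hRdef]; gcongr; exact perpetuitySum_le_tsum hω hsum _
  rw [ge_iff_le, ← ENNReal.toReal_prod]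
  refine ENNReal.toReal_mono (measure_ne_top _ _) ?_
  calc ∏ i ∈ Finset.Icc 1 (n + 1), ℙ {ω | M i ω > 1 - δ i}
      = ℙ {ω | ∀ k < n + 1, 1 - δ (n + 1 - k) < M k ω} :=
        (measure_forall_lt_eq_prod hindep hident _ _).symm
    _ ≤ ℙ {ω | R ω > x (n + 1)} := measure_mono_ae hsub
end

section
/- Let f ∈ Γ with auxiliary function g, i.e., f is nondecreasing, right-continuous, and f(x + u g(x))/f(x) → e^u for all u ∈ ℝ as x → ∞. Then f is rapidly varying: for every λ > 1, f(λx)/f(x) → ∞ as x → ∞. -/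
open Filter Set

/-- Every function in the de Haan class `Γ` is rapidly varying:
`f(λ x)/f(x) → ∞` for every `λ > 1`. -/
theorem stmt_7 (f g : ℝ → ℝ)
    (hfpos : ∀ x, 0 < f x) (hgpos : ∀ x, 0 < g x)
    (hmono : Monotone f)
    (hrc : ∀ x, ContinuousWithinAt f (Set.Ici x) x)
    (hgmeas : Measurable g)
    (hΓ : ∀ u : ℝ, Tendsto (fun x => f (x + u * g x) / f x) atTop (nhds (Real.exp u))) :
    ∀ l > 1, Tendsto (fun x => f (l * x) / f x) atTop atTop := by
  -- Step 1: f → ∞.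
  have hftop : Tendsto f atTop atTop := by
    by_contra h
    have hbdd : BddAbove (Set.range f) := by
      by_contra hb
      refine h (tendsto_atTop_atTop_of_monotone hmono fun b => ?_)
      obtain ⟨y, hy, hy2⟩ := not_bddAbove_iff.1 hb b
      obtain ⟨a, rfl⟩ := hy
      exact ⟨a, hy2.le⟩
    have h1 : Tendsto f atTop (nhds (⨆ x, f x)) := tendsto_atTop_ciSup hmono hbdd
    have harg : Tendsto (fun x : ℝ => x + 1 * g x) atTop atTop := by
      refine tendsto_atTop_mono (fun x => ?_) tendsto_id
      have := (hgpos x).le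
      simp only [id]
      linarith
    have h2 : Tendsto (fun x : ℝ => f (x + 1 * g x)) atTop (nhds (⨆ x, f x)) :=
      h1.comp harg
    have hS : 0 < ⨆ x, f x := lt_of_lt_of_le (hfpos 0) (le_ciSup hbdd 0)
    have h3 : Tendsto (fun x : ℝ => f (x + 1 * g x) / f x) atTop
        (nhds ((⨆ x, f x) / (⨆ x, f x))) := h2.div h1 hS.ne'
    have heq : Real.exp 1 = (⨆ x, f x) / (⨆ x, f x) := tendsto_nhds_unique (hΓ 1) h3
    rw [div_self hS.ne'] at heq
    have := Real.exp_one_gt_d9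
    linarith
  -- Step 2: g is eventually ≤ ε x for every ε > 0.
  have hglin : ∀ ε : ℝ, 0 < ε → ∀ᶠ x in atTop, g x ≤ ε * x := by
    intro ε hε
    set v : ℝ := 1 / ε with hv
    have hv0 : 0 < v := by positivity
    have h1 : ∀ᶠ x in atTop, Real.exp (-v) / 2 < f (x + (-v) * g x) / f x :=
      (hΓ (-v)).eventually (eventually_gt_nhds (half_lt_self (Real.exp_pos _)))
    have h2 : ∀ᶠ x in atTop, f 0 / (Real.exp (-v) / 2) < f x :=
      hftop.eventually_gt_atTop _
    filter_upwards [h1, h2, eventually_gt_atTop (0 : ℝ)] with x hx1 hx2 hx0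
    by_contra hgx
    push_neg at hgx
    have hvg : x < v * g x := by
      have h := mul_lt_mul_of_pos_left hgx hv0
      have hx' : v * (ε * x) = x := by rw [hv]; field_simp
      linarith
    have harg : x + (-v) * g x ≤ 0 := by nlinarith
    have hle : f (x + (-v) * g x) ≤ f 0 := hmono harg
    have hfx : 0 < f x := hfpos x
    have he2 : 0 < Real.exp (-v) / 2 := by positivity
    have hA : Real.exp (-v) / 2 * f x < f (x + (-v) * g x) :=
      (lt_div_iff₀ hfx).mp hx1
    have hB : f 0 < f x * (Real.exp (-v) / 2) := (div_lt_iff₀ he2).mp hx2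
    nlinarith
  -- Step 3: conclusion.
  intro l hl
  rw [tendsto_atTop]
  intro b
  set M : ℝ := max b 1 with hM
  have hM1 : (1 : ℝ) ≤ M := le_max_right _ _
  set u : ℝ := Real.log (2 * M) with hu
  have hu0 : 0 < u := Real.log_pos (by linarith)
  have heu : Real.exp u = 2 * M := Real.exp_log (by linarith)
  have h1 : ∀ᶠ x in atTop, M ≤ f (x + u * g x) / f x := by
    refine (hΓ u).eventually (eventually_ge_nhds ?_)
    rw [heu]; linarith
  have h2 := hglin ((l - 1) / u) (div_pos (by linarith) hu0)
  filter_upwards [h1, h2, eventually_ge_atTop (0 : ℝ)] with x hx1 hx2 hx0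
  have harg : x + u * g x ≤ l * x := by
    have : u * g x ≤ (l - 1) * x := by
      calc u * g x ≤ u * ((l - 1) / u * x) := by
            apply mul_le_mul_of_nonneg_left hx2 hu0.le
      _ = (l - 1) * x := by field_simp
    linarith
  have hmle : f (x + u * g x) ≤ f (l * x) := hmono harg
  calc b ≤ M := le_max_left _ _
  _ ≤ f (x + u * g x) / f x := hx1
  _ ≤ f (l * x) / f x := by gcongr; exact (hfpos x).le
end

section
/- Let f ∈ SR(r*) with r* > 1 (smoothly varying of index r*) and strictly convex on a neighborhood of infinity. Then its convex conjugate f* is regularly varying with index r, where 1/r + 1/r* = 1, and (f*)' = (f')^{-1} is regularly varying with index 1/(r* − 1). -/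
open Filter Set Real

-- MVT window lemma
lemma mvt_window (φ φ' : ℝ → ℝ) (hd : ∀ᶠ t in atTop, HasDerivAt φ (φ' t) t)
    {c : ℝ} (hc : Tendsto φ' atTop (nhds c)) (a : ℝ) :
    Tendsto (fun t => φ (t + a) - φ t) atTop (nhds (c * a)) := by
  rcases eq_or_ne a 0 with rfl | ha
  · simpa using tendsto_const_nhds
  rw [Metric.tendsto_nhds]
  intro ε hε
  have hδ : (0:ℝ) < ε / (|a| + 1) := by positivity
  have hev : ∀ᶠ t in atTop, HasDerivAt φ (φ' t) t ∧ dist (φ' t) c < ε / (|a| + 1) :=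
    hd.and (Metric.tendsto_nhds.1 hc _ hδ)
  obtain ⟨T, hT⟩ := eventually_atTop.1 hev
  filter_upwards [eventually_ge_atTop (T + |a|)] with t ht
  have haT : T + |a| ≤ t := ht
  have h1 : ∀ s, min t (t + a) ≤ s → HasDerivAt φ (φ' s) s ∧ dist (φ' s) c < ε / (|a| + 1) := by
    intro s hs
    apply hT
    rcases le_total 0 a with h | h
    · have : min t (t+a) = t := by simp [min_eq_left, le_add_of_nonneg_right h]
      nlinarith [abs_nonneg a, this ▸ hs]
    · have habs : |a| = -a := abs_of_nonpos h
      have : min t (t+a) = t + a := by rw [min_eq_right (by linarith)]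
      nlinarith [this ▸ hs]
  have key : ∃ ξ, dist (φ' ξ) c < ε / (|a| + 1) ∧ φ (t + a) - φ t = φ' ξ * a := by
    rcases lt_or_gt_of_ne ha with hneg | hpos
    · have hlt : t + a < t := by linarith
      obtain ⟨ξ, hξ, heq⟩ := exists_hasDerivAt_eq_slope φ φ' hlt
        (fun s hs => ((h1 s (by simp [min_eq_right hlt.le] at hs ⊢; linarith [hs.1])).1).continuousAt.continuousWithinAt)
        (fun s hs => (h1 s (by simp [min_eq_right hlt.le]; linarith [hs.1])).1)
      refine ⟨ξ, (h1 ξ (by simp [min_eq_right hlt.le]; linarith [hξ.1])).2, ?_⟩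
      have hane : -a ≠ 0 := by simpa using ha
      rw [heq]
      rw [show t - (t + a) = -a by ring, div_neg, neg_mul, div_mul_cancel₀ _ ha]
      ring
    · have hlt : t < t + a := by linarith
      obtain ⟨ξ, hξ, heq⟩ := exists_hasDerivAt_eq_slope φ φ' hlt
        (fun s hs => ((h1 s (by simp [min_eq_left hlt.le] at hs ⊢; linarith [hs.1])).1).continuousAt.continuousWithinAt)
        (fun s hs => (h1 s (by simp [min_eq_left hlt.le]; linarith [hs.1])).1)
      refine ⟨ξ, (h1 ξ (by simp [min_eq_left hlt.le]; linarith [hξ.1])).2, ?_⟩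
      have h3 : t + a - t = a := by ring
      rw [h3] at heq
      rw [heq]
      field_simp
  obtain ⟨ξ, hξd, hξe⟩ := key
  rw [Real.dist_eq] at hξd ⊢
  have : φ (t + a) - φ t - c * a = (φ' ξ - c) * a := by rw [hξe]; ring
  rw [this, abs_mul]
  calc |φ' ξ - c| * |a| < ε / (|a| + 1) * (|a| + 1) := by
        apply mul_lt_mul' hξd.le ?_ (abs_nonneg a) hδ |>.trans_le le_rfl
        · linarith [abs_nonneg a]
      _ = ε := by field_simp

lemma ratio_limit (u u' : ℝ → ℝ) (hupos : ∀ᶠ x in atTop, 0 < u x)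
    (hd : ∀ᶠ x in atTop, HasDerivAt u (u' x) x)
    {c : ℝ} (hlim : Tendsto (fun x => x * u' x / u x) atTop (nhds c)) :
    ∀ l > (0:ℝ), Tendsto (fun x => u (l * x) / u x) atTop (nhds (l ^ c)) := by
  intro l hl
  set φ : ℝ → ℝ := fun t => Real.log (u (Real.exp t)) with hφ
  set φ' : ℝ → ℝ := fun t => Real.exp t * u' (Real.exp t) / u (Real.exp t) with hφ'
  have hexp : Tendsto Real.exp atTop atTop := Real.tendsto_exp_atTop
  have hd' : ∀ᶠ t in atTop, HasDerivAt φ (φ' t) t := by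
    filter_upwards [hexp.eventually (hupos.and hd)] with t ⟨hpos, hder⟩
    have h1 : HasDerivAt (fun t => u (Real.exp t)) (u' (Real.exp t) * Real.exp t) t :=
      hder.comp t (Real.hasDerivAt_exp t)
    have h2 := h1.log hpos.ne'
    convert h2 using 1
    simp only [hφ']
    ring
  have hc' : Tendsto φ' atTop (nhds c) := hlim.comp hexp
  have hwin := mvt_window φ φ' hd' hc' (Real.log l)
  have hlx : Tendsto (fun t => l * Real.exp t) atTop atTop :=
    (tendsto_const_mul_atTop_of_pos hl).2 hexp
  have heq : ∀ᶠ t in atTop, φ (t + Real.log l) - φ t = Real.log (u (l * Real.exp t) / u (Real.exp t)) := by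
    filter_upwards [hexp.eventually hupos, hlx.eventually hupos] with t h1 h2
    have : Real.exp (t + Real.log l) = l * Real.exp t := by
      rw [Real.exp_add, Real.exp_log hl]; ring
    rw [hφ]
    simp only []
    rw [this, Real.log_div h2.ne' h1.ne']
  have h3 : Tendsto (fun t => Real.log (u (l * Real.exp t) / u (Real.exp t))) atTop
      (nhds (c * Real.log l)) := hwin.congr' heq
  have h4 : Tendsto (fun t => u (l * Real.exp t) / u (Real.exp t)) atTop
      (nhds (Real.exp (c * Real.log l))) := by
    have := (Real.continuous_exp.tendsto _).comp h3
    refine this.congr' ?_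
    filter_upwards [hexp.eventually hupos, hlx.eventually hupos] with t h1 h2
    simp only [Function.comp]
    rw [Real.exp_log (by positivity)]
  have h5 : Tendsto (fun x => u (l * x) / u x) atTop (nhds (Real.exp (c * Real.log l))) := by
    have := h4.comp Real.tendsto_log_atTop
    refine this.congr' ?_
    filter_upwards [eventually_gt_atTop 0] with x hx
    simp only [Function.comp]
    rw [Real.exp_log hx]
  convert h5 using 2
  rw [Real.rpow_def_of_pos hl, mul_comm]

lemma growth_lemma (u u' : ℝ → ℝ) (hupos : ∀ᶠ x in atTop, 0 < u x)
    (hd : ∀ᶠ x in atTop, HasDerivAt u (u' x) x)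
    {c : ℝ} (hlim : Tendsto (fun x => x * u' x / u x) atTop (nhds c)) (hc1 : 1 < c) :
    Tendsto (fun x => u x / x) atTop atTop := by
  set φ : ℝ → ℝ := fun t => Real.log (u (Real.exp t)) with hφ
  set φ' : ℝ → ℝ := fun t => Real.exp t * u' (Real.exp t) / u (Real.exp t) with hφ'
  have hexp : Tendsto Real.exp atTop atTop := Real.tendsto_exp_atTop
  have hd' : ∀ᶠ t in atTop, HasDerivAt φ (φ' t) t := by
    filter_upwards [hexp.eventually (hupos.and hd)] with t ⟨hpos, hder⟩
    have h1 : HasDerivAt (fun t => u (Real.exp t)) (u' (Real.exp t) * Real.exp t) t :=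
      hder.comp t (Real.hasDerivAt_exp t)
    have h2 := h1.log hpos.ne'
    convert h2 using 1
    simp only [hφ']; ring
  have hc' : Tendsto φ' atTop (nhds c) := hlim.comp hexp
  set b : ℝ := (1 + c) / 2 with hb
  have hb1 : 1 < b := by rw [hb]; linarith
  have hbc : b < c := by rw [hb]; linarith
  have hev : ∀ᶠ t in atTop, HasDerivAt φ (φ' t) t ∧ b ≤ φ' t ∧ 0 < u (Real.exp t) :=
    hd'.and ((hc'.eventually (eventually_ge_nhds hbc)).and (hexp.eventually hupos))
  obtain ⟨T, hT⟩ := eventually_atTop.1 hev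
  -- for t > T, φ t ≥ φ T + b (t - T)
  have hlow : ∀ t, T < t → φ T + b * (t - T) ≤ φ t := by
    intro t htT
    obtain ⟨ξ, hξ, heq⟩ := exists_hasDerivAt_eq_slope φ φ' htT
      (fun s hs => ((hT s hs.1).1).continuousAt.continuousWithinAt)
      (fun s hs => (hT s hs.1.le).1)
    have hb' : b ≤ φ' ξ := (hT ξ hξ.1.le).2.1
    have hpos : (0:ℝ) < t - T := by linarith
    rw [heq] at hb'
    have h4 : b * (t - T) ≤ φ t - φ T := (le_div_iff₀ hpos).1 hb'
    linarith
  have hcomp : Tendsto (fun t => Real.exp (φ T - b * T + (b - 1) * t)) atTop atTop := by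
    apply Real.tendsto_exp_atTop.comp
    apply tendsto_atTop_add_const_left _ _
    exact (tendsto_const_mul_atTop_of_pos (by linarith)).2 tendsto_id
  have hmain : Tendsto (fun t => u (Real.exp t) / Real.exp t) atTop atTop := by
    apply tendsto_atTop_mono' atTop _ hcomp
    filter_upwards [eventually_gt_atTop T] with t ht
    have h1 := hlow t ht
    have h2 : u (Real.exp t) / Real.exp t = Real.exp (φ t - t) := by
      rw [Real.exp_sub, hφ]
      simp only []
      rw [Real.exp_log (hT t ht.le).2.2]
    rw [h2]
    apply Real.exp_le_exp.2
    nlinarith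
  have := hmain.comp Real.tendsto_log_atTop
  refine this.congr' ?_
  filter_upwards [eventually_gt_atTop 0] with x hx
  simp only [Function.comp]
  rw [Real.exp_log hx]

set_option maxHeartbeats 1000000 in
/-- If `f` is smoothly varying of index `r* > 1` and ultimately strictly convex,
then its convex conjugate `f*` is regularly varying with index `r`
(`1/r + 1/r* = 1`) and `(f*)' = (f')⁻¹` is regularly varying with index
`1/(r* − 1)`. -/
theorem stmt_11 (f fstar : ℝ → ℝ) (rs r : ℝ) (hrs : 1 < rs)
    (hr : 1 / r + 1 / rs = 1)
    (hfpos : ∀ x > 0, 0 < f x)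
    (hsmooth : ContDiffOn ℝ (⊤ : ℕ∞) f (Set.Ioi 0))
    (hvar : ∀ n : ℕ, Tendsto (fun x => x ^ n * iteratedDeriv n f x / f x) atTop
      (nhds (∏ i ∈ Finset.range n, (rs - i))))
    (hconv : ∃ X : ℝ, StrictConvexOn ℝ (Set.Ioi X) f)
    (hstar : ∀ x : ℝ, fstar x = sSup {y : ℝ | ∃ z ∈ Set.Ioi (0 : ℝ), y = z * x - f z}) :
    (∀ l > 0, Tendsto (fun x => fstar (l * x) / fstar x) atTop (nhds (l ^ r))) ∧
      (∀ l > 0, Tendsto (fun x => deriv fstar (l * x) / deriv fstar x) atTop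
        (nhds (l ^ (1 / (rs - 1))))) := by
  classical
  set f1 : ℝ → ℝ := deriv f with hf1def
  set f2 : ℝ → ℝ := deriv f1 with hf2def
  have hrs0 : (0:ℝ) < rs := by linarith
  -- differentiability facts
  have hdiff : DifferentiableOn ℝ f (Ioi 0) := hsmooth.differentiableOn (by simp)
  have hf1cd : ContDiffOn ℝ (⊤ : ℕ∞) f1 (Ioi 0) := hsmooth.deriv_of_isOpen isOpen_Ioi (by simp)
  have hf1diff : DifferentiableOn ℝ f1 (Ioi 0) := hf1cd.differentiableOn (by simp)
  have hDf : ∀ x : ℝ, 0 < x → HasDerivAt f (f1 x) x := fun x hx =>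
    (hdiff.differentiableAt (isOpen_Ioi.mem_nhds hx)).hasDerivAt
  have hDf1 : ∀ x : ℝ, 0 < x → HasDerivAt f1 (f2 x) x := fun x hx =>
    (hf1diff.differentiableAt (isOpen_Ioi.mem_nhds hx)).hasDerivAt
  -- limits T1, T2 from hvar
  have T1 : Tendsto (fun x => x * f1 x / f x) atTop (nhds rs) := by
    have h := hvar 1
    simpa [iteratedDeriv_one] using h
  have T2 : Tendsto (fun x => x ^ 2 * f2 x / f x) atTop (nhds (rs * (rs - 1))) := by
    have h := hvar 2
    have h2 : iteratedDeriv 2 f = f2 := by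
      rw [show (2:ℕ) = 1 + 1 from rfl, iteratedDeriv_succ, iteratedDeriv_one]
    rw [h2] at h
    have : (∏ i ∈ Finset.range 2, (rs - (i:ℝ))) = rs * (rs - 1) := by
      simp [Finset.prod_range_succ]
    rwa [this] at h
  -- eventual positivity
  have hfpos' : ∀ᶠ x in atTop, 0 < f x := by
    filter_upwards [eventually_gt_atTop 0] with x hx using hfpos x hx
  have hf1pos : ∀ᶠ x in atTop, 0 < f1 x := by
    filter_upwards [T1.eventually (eventually_gt_nhds hrs0), hfpos',
      eventually_gt_atTop 0] with x h1 h2 h3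
    by_contra h
    push_neg at h
    have : x * f1 x / f x ≤ 0 := by
      apply div_nonpos_of_nonpos_of_nonneg _ h2.le
      exact mul_nonpos_of_nonneg_of_nonpos h3.le h
    linarith
  have hf2pos : ∀ᶠ x in atTop, 0 < f2 x := by
    have hpos : (0:ℝ) < rs * (rs - 1) := by nlinarith
    filter_upwards [T2.eventually (eventually_gt_nhds hpos), hfpos',
      eventually_gt_atTop 0] with x h1 h2 h3
    by_contra h
    push_neg at h
    have : x ^ 2 * f2 x / f x ≤ 0 := by
      apply div_nonpos_of_nonpos_of_nonneg _ h2.le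
      exact mul_nonpos_of_nonneg_of_nonpos (by positivity) h
    linarith
  -- T3
  have T3 : Tendsto (fun x => x * f2 x / f1 x) atTop (nhds (rs - 1)) := by
    have hd := T2.div T1 (ne_of_gt hrs0)
    have heq : (rs * (rs - 1)) / rs = rs - 1 := by field_simp
    rw [heq] at hd
    refine hd.congr' ?_
    filter_upwards [hfpos', hf1pos, eventually_gt_atTop 0] with x h1 h2 h3
    rw [Pi.div_apply]
    field_simp
  have hDfev : ∀ᶠ x in atTop, HasDerivAt f (f1 x) x := by
    filter_upwards [eventually_gt_atTop 0] with x hx using hDf x hx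
  have hDf1ev : ∀ᶠ x in atTop, HasDerivAt f1 (f2 x) x := by
    filter_upwards [eventually_gt_atTop 0] with x hx using hDf1 x hx
  -- f' is regularly varying of index rs - 1
  have Rf1 : ∀ l > (0:ℝ), Tendsto (fun x => f1 (l * x) / f1 x) atTop (nhds (l ^ (rs - 1))) :=
    ratio_limit f1 f2 hf1pos hDf1ev T3
  -- f x / x → ∞ and f1 → ∞
  have hgrow : Tendsto (fun x => f x / x) atTop atTop := growth_lemma f f1 hfpos' hDfev T1 hrs
  have hf1top : Tendsto f1 atTop atTop := by
    have h := T1.pos_mul_atTop hrs0 hgrow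
    refine h.congr' ?_
    filter_upwards [hfpos', eventually_gt_atTop 0] with x h1 h2
    field_simp
  -- choose threshold X2
  have hfix : ∀ᶠ x in atTop, (1 + rs) / 2 ≤ x * f1 x / f x :=
    T1.eventually (eventually_ge_nhds (by linarith))
  obtain ⟨X1, hX1⟩ := eventually_atTop.1 (hfpos'.and (hf1pos.and (hf2pos.and hfix)))
  set X2 : ℝ := max X1 1 with hX2def
  have hX2pos : (0:ℝ) < X2 := lt_of_lt_of_le one_pos (le_max_right _ _)
  have hP : ∀ x, X2 ≤ x → 0 < f x ∧ 0 < f1 x ∧ 0 < f2 x ∧ (1 + rs) / 2 ≤ x * f1 x / f x :=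
    fun x hx => hX1 x (le_trans (le_max_left _ _) hx)
  have hX2sub : Ici X2 ⊆ Ioi (0:ℝ) := fun x hx => lt_of_lt_of_le hX2pos hx
  -- f1 strictly monotone on Ici X2
  have hmono : StrictMonoOn f1 (Ici X2) := by
    apply strictMonoOn_of_deriv_pos (convex_Ici X2)
    · exact (hf1cd.continuousOn).mono hX2sub
    · intro x hx
      rw [interior_Ici] at hx
      exact (hP x (le_of_lt hx)).2.2.1
  have hmonole : ∀ a b, X2 ≤ a → X2 ≤ b → f1 a < f1 b → a < b := by
    intro a b ha hb hab
    by_contra h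
    push_neg at h
    rcases eq_or_lt_of_le h with rfl | h'
    · exact lt_irrefl _ hab
    · exact absurd (hmono hb ha h') (by linarith)
  -- definition of the inverse g of f1
  set Y1 : ℝ := f1 (X2 + 1) with hY1def
  have hexists : ∀ y, Y1 < y → ∃ z, X2 + 1 < z ∧ f1 z = y := by
    intro y hy
    obtain ⟨Z, hZ⟩ := eventually_atTop.1 (hf1top.eventually (eventually_gt_atTop y))
    set Z' : ℝ := max Z (X2 + 2) with hZ'def
    have hZ'2 : X2 + 2 ≤ Z' := le_max_right _ _
    have hZ'y : y < f1 Z' := hZ Z' (le_max_left _ _)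
    have hcont : ContinuousOn f1 (Icc (X2 + 1) Z') :=
      (hf1cd.continuousOn).mono (fun x hx => lt_of_lt_of_le (by linarith) hx.1)
    have hIcc : Icc (f1 (X2+1)) (f1 Z') ⊆ f1 '' (Icc (X2+1) Z') :=
      intermediate_value_Icc (by linarith) hcont
    obtain ⟨z, hz, hfz⟩ := hIcc ⟨le_of_lt hy, le_of_lt hZ'y⟩
    refine ⟨z, ?_, hfz⟩
    rcases eq_or_lt_of_le hz.1 with rfl | h'
    · exact absurd hfz (by rw [← hY1def]; exact ne_of_lt hy)
    · exact h'
  set g : ℝ → ℝ := fun y => if h : ∃ z, X2 + 1 < z ∧ f1 z = y then h.choose else X2 + 2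
    with hgdef
  have hgspec : ∀ y, Y1 < y → X2 + 1 < g y ∧ f1 (g y) = y := by
    intro y hy
    have h := hexists y hy
    simp only [hgdef, dif_pos h]
    exact h.choose_spec
  have hgX2 : ∀ y, Y1 < y → X2 ≤ g y := fun y hy => by linarith [(hgspec y hy).1]
  -- g tends to infinity
  have hgtop : Tendsto g atTop atTop := by
    rw [tendsto_atTop]
    intro M
    set M' : ℝ := max (X2 + 1) M with hM'def
    filter_upwards [eventually_gt_atTop (max Y1 (f1 M'))] with y hy
    have hy1 : Y1 < y := lt_of_le_of_lt (le_max_left _ _) hy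
    have hy2 : f1 M' < y := lt_of_le_of_lt (le_max_right _ _) hy
    have h := hgspec y hy1
    have : M' < g y := by
      apply hmonole M' (g y) (le_trans (by linarith) (le_max_left _ _)) (hgX2 y hy1)
      rw [h.2]; exact hy2
    calc M ≤ M' := le_max_right _ _
      _ ≤ g y := this.le
  -- g is regularly varying of index 1/(rs-1)
  clear_value g Y1 X2 f1 f2
  have hσ : (0:ℝ) < rs - 1 := by linarith
  have Rg : ∀ l > (0:ℝ), Tendsto (fun y => g (l * y) / g y) atTop (nhds (l ^ (1/(rs-1)))) := by
    intro l hl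
    set μ : ℝ := l ^ (1/(rs-1)) with hμdef
    have hμpos : 0 < μ := Real.rpow_pos_of_pos hl _
    have hμσ : μ ^ (rs - 1) = l := by
      rw [hμdef, ← Real.rpow_mul hl.le, one_div, inv_mul_cancel₀ hσ.ne', Real.rpow_one]
    rw [Metric.tendsto_nhds]
    intro ε hε
    set m1 : ℝ := μ - min (ε/2) (μ/2) with hm1def
    set m2 : ℝ := μ + ε/2 with hm2def
    have hm1pos : 0 < m1 := by
      rw [hm1def]
      have : min (ε/2) (μ/2) ≤ μ/2 := min_le_right _ _
      linarith
    have hm1μ : m1 < μ := by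
      rw [hm1def]
      have : 0 < min (ε/2) (μ/2) := lt_min (by linarith) (by linarith)
      linarith
    have hm2μ : μ < m2 := by rw [hm2def]; linarith
    have hm2pos : 0 < m2 := by linarith
    have hm1l : m1 ^ (rs - 1) < l := by
      rw [← hμσ]
      exact Real.rpow_lt_rpow hm1pos.le hm1μ hσ
    have hm2l : l < m2 ^ (rs - 1) := by
      rw [← hμσ]
      exact Real.rpow_lt_rpow hμpos.le hm2μ hσ
    -- eventual conditions on x
    have hev1 : ∀ᶠ x in atTop, f1 (m1 * x) < l * f1 x := by
      filter_upwards [(Rf1 m1 hm1pos).eventually (eventually_lt_nhds hm1l), hf1pos]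
        with x h1 h2
      calc f1 (m1 * x) = f1 (m1 * x) / f1 x * f1 x := by field_simp
        _ < l * f1 x := by apply mul_lt_mul_of_pos_right h1 h2
    have hev2 : ∀ᶠ x in atTop, l * f1 x < f1 (m2 * x) := by
      filter_upwards [(Rf1 m2 hm2pos).eventually (eventually_gt_nhds hm2l), hf1pos]
        with x h1 h2
      calc l * f1 x < f1 (m2 * x) / f1 x * f1 x := by apply mul_lt_mul_of_pos_right h1 h2
        _ = f1 (m2 * x) := by field_simp
    have hevx : ∀ᶠ x in atTop, f1 (m1 * x) < l * f1 x ∧ l * f1 x < f1 (m2 * x)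
        ∧ X2 ≤ m1 * x ∧ X2 ≤ m2 * x ∧ 0 < x := by
      have t1 : Tendsto (fun x => m1 * x) atTop atTop :=
        (tendsto_const_mul_atTop_of_pos hm1pos).2 tendsto_id
      have t2 : Tendsto (fun x => m2 * x) atTop atTop :=
        (tendsto_const_mul_atTop_of_pos hm2pos).2 tendsto_id
      filter_upwards [hev1, hev2, t1.eventually (eventually_ge_atTop X2),
        t2.eventually (eventually_ge_atTop X2), eventually_gt_atTop 0] with x h1 h2 h3 h4 h5
      exact ⟨h1, h2, h3, h4, h5⟩
    have hly : Tendsto (fun y => l * y) atTop atTop :=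
      (tendsto_const_mul_atTop_of_pos hl).2 tendsto_id
    filter_upwards [eventually_gt_atTop Y1, hly.eventually (eventually_gt_atTop Y1),
      hgtop.eventually hevx] with y hy1 hy2 hy3
    obtain ⟨h1, h2, h3, h4, h5⟩ := hy3
    have hgy := hgspec y hy1
    have hgly := hgspec (l * y) hy2
    -- f1 (g (l y)) = l * y = l * f1 (g y)
    have key : f1 (m1 * g y) < f1 (g (l * y)) ∧ f1 (g (l * y)) < f1 (m2 * g y) := by
      have e1 : f1 (g (l * y)) = l * f1 (g y) := by rw [hgly.2, hgy.2]
      rw [e1]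
      exact ⟨h1, h2⟩
    have hlow : m1 * g y < g (l * y) := hmonole _ _ h3 (hgX2 _ hy2) key.1
    have hhigh : g (l * y) < m2 * g y := hmonole _ _ (hgX2 _ hy2) h4 key.2
    have hgypos : 0 < g y := h5
    rw [Real.dist_eq, abs_lt]
    constructor
    · have hra : m1 < g (l * y) / g y := (lt_div_iff₀ hgypos).2 (by linarith [hlow])
      have hm1' : μ - ε < m1 := by
        rw [hm1def]
        have hmin : min (ε/2) (μ/2) ≤ ε/2 := min_le_left _ _
        linarith
      have h6 : μ - ε < g (l * y) / g y := hm1'.trans hra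
      linarith [h6]
    · have : g (l * y) / g y < m2 := (div_lt_iff₀ hgypos).2 (by linarith [hhigh])
      rw [hm2def] at this
      linarith
  -- threshold x3 for the Legendre formula
  obtain ⟨x3, hx3⟩ := eventually_atTop.1
    ((eventually_gt_atTop Y1).and ((hgtop.eventually
      (eventually_ge_atTop ((X2+1)*(rs+1)/(rs-1)))).and (eventually_gt_atTop 0)))
  have hfbound : ∀ x, x3 < x → f (g x) ≤ 2 * (g x * x) / (1 + rs) := by
    intro x hx
    obtain ⟨hY, hgbig, hxpos⟩ := hx3 x hx.le
    have hgx := hgspec x hY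
    have hfgpos : 0 < f (g x) := (hP (g x) (hgX2 x hY)).1
    have hp := (hP (g x) (hgX2 x hY)).2.2.2
    rw [hgx.2] at hp
    have h8 : (1 + rs)/2 * f (g x) ≤ g x * x := (le_div_iff₀ hfgpos).1 hp
    rw [le_div_iff₀ (by linarith : (0:ℝ) < 1 + rs)]
    linarith
  have hgreat : ∀ x, x3 < x →
      IsGreatest {y : ℝ | ∃ z ∈ Set.Ioi (0:ℝ), y = z * x - f z} (x * g x - f (g x)) := by
    intro x hx
    obtain ⟨hY, hgbig, hxpos⟩ := hx3 x hx.le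
    have hgx := hgspec x hY
    have hgxpos : 0 < g x := by linarith [hgx.1, hX2pos]
    constructor
    · exact ⟨g x, hgxpos, by ring⟩
    · rintro y ⟨z, hz, rfl⟩
      rw [mem_Ioi] at hz
      have hfb := hfbound x hx
      rcases le_or_gt z (X2 + 1) with hzle | hzgt
      · -- small z
        have hfz : 0 < f z := hfpos z hz
        have h9 : z * x ≤ (X2 + 1) * x := mul_le_mul_of_nonneg_right hzle hxpos.le
        have h10 : (X2 + 1) * x ≤ x * g x - f (g x) := by
          have e1 : (X2+1)*(rs+1) ≤ g x * (rs-1) := (div_le_iff₀ hσ).1 hgbig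
          have e2 : f (g x) * (1+rs) ≤ 2 * (g x * x) :=
            (le_div_iff₀ (by linarith : (0:ℝ) < 1 + rs)).1 hfb
          nlinarith [mul_le_mul_of_nonneg_right e1 hxpos.le, e2, hgxpos, hxpos]
        linarith
      · -- large z : use monotonicity of f1 (convexity)
        rcases lt_trichotomy z (g x) with hzg | hzg | hzg
        · obtain ⟨ξ, hξ, hslope⟩ := exists_hasDerivAt_eq_slope f f1 hzg
            (hdiff.continuousOn.mono (fun w hw => lt_of_lt_of_le (by linarith [hX2pos] : (0:ℝ) < z) hw.1))
            (fun w hw => hDf w (by linarith [hw.1, hX2pos]))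
          have hξX2 : X2 ≤ ξ := by linarith [hξ.1]
          have hf1ξ : f1 ξ ≤ x := by
            rw [← hgx.2]
            exact le_of_lt (hmono hξX2 (hgX2 x hY) hξ.2)
          have hmul : f (g x) - f z = f1 ξ * (g x - z) := by
            rw [hslope, div_mul_cancel₀ _ (sub_ne_zero.mpr (ne_of_gt hzg))]
          nlinarith [mul_le_mul_of_nonneg_right hf1ξ (by linarith : (0:ℝ) ≤ g x - z)]
        · rw [hzg]; ring_nf; exact le_refl _
        · obtain ⟨ξ, hξ, hslope⟩ := exists_hasDerivAt_eq_slope f f1 hzg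
            (hdiff.continuousOn.mono (fun w hw => lt_of_lt_of_le (by linarith [hgxpos] : (0:ℝ) < g x) hw.1))
            (fun w hw => hDf w (by linarith [hw.1, hgxpos]))
          have hξX2 : X2 ≤ ξ := le_trans (hgX2 x hY) hξ.1.le
          have hf1ξ : x ≤ f1 ξ := by
            rw [← hgx.2]
            exact le_of_lt (hmono (hgX2 x hY) hξX2 hξ.1)
          have hmul : f z - f (g x) = f1 ξ * (z - g x) := by
            rw [hslope, div_mul_cancel₀ _ (sub_ne_zero.mpr (ne_of_gt hzg))]
          nlinarith [mul_le_mul_of_nonneg_right hf1ξ (by linarith : (0:ℝ) ≤ z - g x)]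
  have hformula : ∀ x, x3 < x → fstar x = x * g x - f (g x) := by
    intro x hx
    rw [hstar x]
    exact (hgreat x hx).csSup_eq
  -- sandwich inequality
  have hsand : ∀ x y, x3 < x → x3 < y → (y - x) * g x ≤ fstar y - fstar x := by
    intro x y hx hy
    have hgxpos : 0 < g x := by linarith [(hgspec x (hx3 x hx.le).1).1, hX2pos]
    have h1 : g x * y - f (g x) ≤ fstar y := by
      rw [hformula y hy]
      exact (hgreat y hy).2 ⟨g x, hgxpos, rfl⟩
    rw [hformula x hx]
    have e : (y - x) * g x = g x * y - x * g x := by ring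
    linarith [e, h1]
  -- continuity of g
  have hgcont : ∀ x, Y1 < x → Tendsto g (nhds x) (nhds (g x)) := by
    intro x hx
    rw [tendsto_order]
    constructor
    · intro a ha
      rcases le_or_gt a (X2 + 1) with h | h
      · filter_upwards [Ioi_mem_nhds hx] with y hy
        linarith [(hgspec y hy).1]
      · have haX : X2 ≤ a := by linarith
        have hfa : f1 a < x := by
          rw [← (hgspec x hx).2]
          exact hmono haX (hgX2 x hx) ha
        filter_upwards [Ioi_mem_nhds hx, Ioi_mem_nhds hfa] with y hy1 hy2
        rw [mem_Ioi] at hy2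
        by_contra hc
        push_neg at hc
        have h5 : f1 (g y) ≤ f1 a := hmono.monotoneOn (hgX2 y hy1) haX hc
        rw [(hgspec y hy1).2] at h5
        linarith
    · intro b hb
      have hbX : X2 ≤ b := le_trans (hgX2 x hx) hb.le
      have hfb : x < f1 b := by
        rw [← (hgspec x hx).2]
        exact hmono (hgX2 x hx) hbX hb
      filter_upwards [Ioi_mem_nhds hx, Iio_mem_nhds hfb] with y hy1 hy2
      rw [mem_Iio] at hy2
      by_contra hc
      push_neg at hc
      have h5 : f1 b ≤ f1 (g y) := hmono.monotoneOn hbX (hgX2 y hy1) hc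
      rw [(hgspec y hy1).2] at h5
      linarith
  -- derivative of fstar
  have hder : ∀ x, x3 < x → HasDerivAt fstar (g x) x := by
    intro x hx
    have hY : Y1 < x := (hx3 x hx.le).1
    rw [hasDerivAt_iff_tendsto_slope]
    have hbound : ∀ᶠ y in nhdsWithin x {x}ᶜ, |slope fstar x y - g x| ≤ |g y - g x| := by
      filter_upwards [nhdsWithin_le_nhds (Ioi_mem_nhds hx), self_mem_nhdsWithin]
        with y hy hne
      simp only [mem_compl_iff, mem_singleton_iff] at hne
      have h1 := hsand x y hx hy
      have h2 := hsand y x hy hx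
      rw [slope_def_field]
      rcases (sub_ne_zero.mpr hne).lt_or_gt with hd | hd
      · -- y - x < 0
        have hs1 : (fstar y - fstar x) / (y - x) ≤ g x := by
          rw [div_le_iff_of_neg hd]
          linarith [(mul_comm (g x) (y - x) : g x * (y-x) = (y-x) * g x)]
        have hs2 : g y ≤ (fstar y - fstar x) / (y - x) := by
          rw [le_div_iff_of_neg hd]
          have e : g y * (y - x) = -((x - y) * g y) := by ring
          linarith [e, h2]
        rw [abs_of_nonpos (by linarith), abs_sub_comm]
        calc -(( fstar y - fstar x) / (y - x) - g x) ≤ g x - g y := by linarith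
          _ ≤ |g x - g y| := le_abs_self _
      · -- 0 < y - x
        have hs1 : g x ≤ (fstar y - fstar x) / (y - x) := by
          rw [le_div_iff₀ hd]
          linarith [(mul_comm (g x) (y - x) : g x * (y-x) = (y-x) * g x)]
        have hs2 : (fstar y - fstar x) / (y - x) ≤ g y := by
          rw [div_le_iff₀ hd]
          have e : g y * (y - x) = -((x - y) * g y) := by ring
          linarith [e, h2]
        rw [abs_of_nonneg (by linarith)]
        calc (fstar y - fstar x) / (y - x) - g x ≤ g y - g x := by linarith
          _ ≤ |g y - g x| := le_abs_self _
    have hgy0 : Tendsto (fun y => |g y - g x|) (nhdsWithin x {x}ᶜ) (nhds 0) := by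
      have h6 : Tendsto (fun y => g y - g x) (nhds x) (nhds (g x - g x)) :=
        (hgcont x hY).sub tendsto_const_nhds
      rw [sub_self] at h6
      have h7 := h6.abs
      rw [abs_zero] at h7
      exact h7.mono_left nhdsWithin_le_nhds
    have h0 : Tendsto (fun y => slope fstar x y - g x) (nhdsWithin x {x}ᶜ) (nhds 0) := by
      apply squeeze_zero_norm' ?_ hgy0
      filter_upwards [hbound] with y hy
      simpa [Real.norm_eq_abs] using hy
    have h8 := h0.add
      (tendsto_const_nhds : Tendsto (fun _ : ℝ => g x) (nhdsWithin x {x}ᶜ) (nhds (g x)))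
    rw [zero_add] at h8
    exact h8.congr (fun y => by ring)
  -- value of r
  have hrne : r ≠ 0 := by
    intro h
    rw [h] at hr
    rw [div_zero, zero_add, div_eq_one_iff_eq (by linarith : rs ≠ 0)] at hr
    linarith
  have hrval : r = 1 + 1 / (rs - 1) := by
    have h1 : 1 / r = (rs - 1) / rs := by
      field_simp at hr ⊢
      linarith
    have h2 : r = rs / (rs - 1) := by
      rw [div_eq_div_iff hrne (by linarith : rs ≠ 0)] at h1
      rw [eq_div_iff hσ.ne']
      linarith
    rw [h2]
    field_simp
    ring
  -- positivity of fstar eventually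
  have hfstarpos : ∀ᶠ x in atTop, 0 < fstar x := by
    filter_upwards [eventually_gt_atTop x3] with x hx
    obtain ⟨hY, hgbig, hxpos⟩ := hx3 x hx.le
    have hgxpos : 0 < g x := by linarith [(hgspec x hY).1, hX2pos]
    have hfb := hfbound x hx
    have e2 : f (g x) * (1+rs) ≤ 2 * (g x * x) :=
      (le_div_iff₀ (by linarith : (0:ℝ) < 1 + rs)).1 hfb
    rw [hformula x hx]
    nlinarith [mul_pos hxpos hgxpos]
  -- ratio of fstar over x g x
  have T1inv : Tendsto (fun z => f z / (z * f1 z)) atTop (nhds (1/rs)) := by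
    have h := T1.inv₀ (ne_of_gt hrs0)
    rw [← one_div] at h
    refine h.congr (fun x => ?_)
    rw [← inv_div, inv_inv]
  have hcomp : Tendsto (fun x => f (g x) / (g x * x)) atTop (nhds (1/rs)) := by
    have h := T1inv.comp hgtop
    refine h.congr' ?_
    filter_upwards [eventually_gt_atTop Y1] with x hx
    simp only [Function.comp]
    rw [(hgspec x hx).2]
  have hKlim : Tendsto (fun x => fstar x / (x * g x)) atTop (nhds (1 - 1/rs)) := by
    have h := (tendsto_const_nhds : Tendsto (fun _ : ℝ => (1:ℝ)) atTop (nhds 1)).sub hcomp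
    refine h.congr' ?_
    filter_upwards [eventually_gt_atTop x3, eventually_gt_atTop Y1,
      eventually_gt_atTop 0] with x hx hY hxpos
    have hgxpos : 0 < g x := by linarith [(hgspec x hY).1, hX2pos]
    rw [hformula x hx]
    field_simp
  have hK0 : (0:ℝ) < 1 - 1/rs := by
    have : 1/rs < 1 := (div_lt_one hrs0).2 hrs
    linarith
  have hKinv : Tendsto (fun x => (x * g x) / fstar x) atTop (nhds (1 - 1/rs)⁻¹) := by
    have h := hKlim.inv₀ hK0.ne'
    refine h.congr (fun x => ?_)
    rw [← inv_div, inv_inv]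
  refine ⟨?_, ?_⟩
  · -- first conclusion
    intro l hl
    have hlx : Tendsto (fun x : ℝ => l * x) atTop atTop :=
      (tendsto_const_mul_atTop_of_pos hl).2 tendsto_id
    have hA : Tendsto (fun x => fstar (l * x) / ((l * x) * g (l * x))) atTop
        (nhds (1 - 1/rs)) := hKlim.comp hlx
    have hB : Tendsto (fun x => ((l * x) * g (l * x)) / (x * g x)) atTop
        (nhds (l * l ^ (1/(rs-1)))) := by
      have h := (Rg l hl).const_mul l
      refine h.congr' ?_
      filter_upwards [eventually_gt_atTop Y1, hlx.eventually (eventually_gt_atTop Y1),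
        eventually_gt_atTop 0] with x hY hY2 hxpos
      have hgxpos : 0 < g x := by linarith [(hgspec x hY).1, hX2pos]
      field_simp
    have hprod := (hA.mul hB).mul hKinv
    have hconst : (1 - 1/rs) * (l * l ^ (1/(rs-1))) * (1 - 1/rs)⁻¹ = l ^ r := by
      rw [hrval, Real.rpow_add hl, Real.rpow_one]
      field_simp
    rw [hconst] at hprod
    refine hprod.congr' ?_
    filter_upwards [eventually_gt_atTop x3, hlx.eventually (eventually_gt_atTop x3),
      eventually_gt_atTop Y1, hlx.eventually (eventually_gt_atTop Y1),
      eventually_gt_atTop 0, hfstarpos, hlx.eventually hfstarpos]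
      with x hx hlx3 hY hY2 hxpos hfs hfs2
    have hgxpos : 0 < g x := by linarith [(hgspec x hY).1, hX2pos]
    have hglxpos : 0 < g (l * x) := by linarith [(hgspec (l*x) hY2).1, hX2pos]
    have hlxpos : 0 < l * x := by positivity
    field_simp
    try ring
  · -- second conclusion
    intro l hl
    have hlx : Tendsto (fun x : ℝ => l * x) atTop atTop :=
      (tendsto_const_mul_atTop_of_pos hl).2 tendsto_id
    refine (Rg l hl).congr' ?_
    filter_upwards [eventually_gt_atTop x3, hlx.eventually (eventually_gt_atTop x3)]
      with x h1 h2
    rw [(hder x h1).deriv, (hder (l * x) h2).deriv]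
end

section
/- Let f ∈ R(r) with r > 1 be differentiable with f' monotone. Then x f'(x) ∼ r f(x) as x → ∞. -/
/-!
Since `f'` is monotone, `f` is convex, so `f'(x)` lies between the slopes of `f` over
`[x/λ, x]` and over `[x, λx]` for every `λ > 1`. Dividing by `f(x)` and using regular variation,
`x f'(x) / f(x)` is eventually squeezed between numbers close to `λ(1 - λ^{-r})/(λ - 1)` and
`(λ^r - 1)/(λ - 1)`. These are difference quotients at `1` of `1 - t^{-r}` and `t^r` (up to the
factor `λ → 1`), so both tend to `r` as `λ → 1⁺`.
-/

open Filter Set Topology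

theorem tendsto_of_eventually_squeeze_family {α ι β : Type*} [TopologicalSpace β] [LinearOrder β]
    [OrderTopology β] {l : Filter α} {p : Filter ι} [p.NeBot] {g : α → β} {L U : ι → α → β}
    {lo up : ι → β} {c : β}
    (hLU : ∀ᶠ i in p, ∀ᶠ x in l, L i x ≤ g x ∧ g x ≤ U i x)
    (hLlim : ∀ᶠ i in p, Tendsto (L i) l (𝓝 (lo i)))
    (hUlim : ∀ᶠ i in p, Tendsto (U i) l (𝓝 (up i)))
    (hlo : Tendsto lo p (𝓝 c)) (hup : Tendsto up p (𝓝 c)) : Tendsto g l (𝓝 c) := by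
  refine tendsto_order.2 ⟨fun a ha => ?_, fun b hb => ?_⟩
  · obtain ⟨i, hLUi, hLlimi, hloi⟩ := (hLU.and (hLlim.and (hlo.eventually_const_lt ha))).exists
    filter_upwards [hLUi, hLlimi.eventually_const_lt hloi] with x hLg haL
    exact haL.trans_le hLg.1
  · obtain ⟨i, hLUi, hUlimi, hupi⟩ := (hLU.and (hUlim.and (hup.eventually_lt_const hb))).exists
    filter_upwards [hLUi, hUlimi.eventually_lt_const hupi] with x hgU hUb
    exact hgU.2.trans_lt hUb

section
variable {f : ℝ → ℝ} {x l : ℝ}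

theorem ConvexOn.mul_deriv_div_le (hf : ConvexOn ℝ (Ioi 0) f) (hfd : DifferentiableAt ℝ f x)
    (hx : 0 < x) (hl : 1 < l) (hfx : 0 < f x) :
    x * deriv f x / f x ≤ (f (l * x) / f x - 1) / (l - 1) := by
  have hxlx : x < l * x := lt_mul_left hx hl
  have h := hf.deriv_le_slope hx (hx.trans hxlx) hxlx hfd
  rw [slope_def_field, le_div_iff₀ (sub_pos.2 hxlx)] at h
  rw [div_sub_one hfx.ne', div_div, le_div_iff₀ (mul_pos hfx (sub_pos.2 hl)), div_mul_eq_mul_div,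
    div_le_iff₀ hfx]
  nlinarith

theorem ConvexOn.le_mul_deriv_div (hf : ConvexOn ℝ (Ioi 0) f) (hfd : DifferentiableAt ℝ f x)
    (hx : 0 < x) (hl : 1 < l) (hfx : 0 < f x) :
    l * (1 - f (l⁻¹ * x) / f x) / (l - 1) ≤ x * deriv f x / f x := by
  have hlx : l⁻¹ * x < x := by
    rw [inv_mul_lt_iff₀ (by linarith)]; exact lt_mul_left hx hl
  have h := hf.slope_le_deriv (by positivity : 0 < l⁻¹ * x) hx hlx hfd
  rw [slope_def_field, div_le_iff₀ (sub_pos.2 hlx)] at h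
  rw [one_sub_div hfx.ne', mul_div_assoc', div_div, div_le_div_iff₀ (by positivity) hfx]
  have h' : l * (f x - f (l⁻¹ * x)) ≤ x * deriv f x * (l - 1) := calc
    _ ≤ l * (deriv f x * (x - l⁻¹ * x)) := mul_le_mul_of_nonneg_left h (by linarith)
    _ = x * deriv f x * (l - 1) := by field_simp
  nlinarith [mul_le_mul_of_nonneg_right h' hfx.le]
end

theorem tendsto_rpow_sub_one_div_sub_one (r : ℝ) :
    Tendsto (fun l : ℝ => (l ^ r - 1) / (l - 1)) (𝓝[>] 1) (𝓝 r) := by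
  have h : HasDerivAt (fun t : ℝ => t ^ r) r 1 := by
    simpa using Real.hasDerivAt_rpow_const (p := r) (x := 1) (Or.inl one_ne_zero)
  refine ((hasDerivWithinAt_iff_tendsto_slope' self_notMem_Ioi).mp h.hasDerivWithinAt).congr
    fun l => ?_
  simp [slope_def_field]

theorem tendsto_mul_one_sub_inv_rpow_div_sub_one (r : ℝ) :
    Tendsto (fun l : ℝ => l * (1 - l⁻¹ ^ r) / (l - 1)) (𝓝[>] 1) (𝓝 r) := by
  have h : HasDerivAt (fun t : ℝ => 1 - t ^ (-r)) r 1 := by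
    simpa using (Real.hasDerivAt_rpow_const (p := -r) (x := 1) (Or.inl one_ne_zero)).const_sub 1
  have hslope := (hasDerivWithinAt_iff_tendsto_slope' self_notMem_Ioi).mp h.hasDerivWithinAt
  have hid : Tendsto (fun l : ℝ => l) (𝓝[>] 1) (𝓝 1) := tendsto_nhdsWithin_of_tendsto_nhds tendsto_id
  have hprod : Tendsto (fun l => l * slope (fun t : ℝ => 1 - t ^ (-r)) 1 l) (𝓝[>] 1) (𝓝 r) := by
    simpa using hid.mul hslope
  refine hprod.congr' ?_
  filter_upwards [self_mem_nhdsWithin] with l (hl : 1 < l)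
  rw [slope_def_field, Real.one_rpow, Real.inv_rpow (by linarith), ← Real.rpow_neg (by linarith)]
  ring

theorem stmt_12_general (f : ℝ → ℝ) (r : ℝ)
    (hfpos : ∀ x > 0, 0 < f x)
    (hreg : ∀ l > 0, Tendsto (fun x => f (l * x) / f x) atTop (nhds (l ^ r)))
    (hdiff : DifferentiableOn ℝ f (Set.Ioi 0))
    (hmono : MonotoneOn (deriv f) (Set.Ioi 0)) :
    Tendsto (fun x => x * deriv f x / f x) atTop (nhds r) := by
  have hconv : ConvexOn ℝ (Ioi 0) f :=
    MonotoneOn.convexOn_of_deriv (convex_Ioi 0) hdiff.continuousOn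
      (by rwa [interior_Ioi]) (by rwa [interior_Ioi])
  have hbounds : ∀ᶠ l in 𝓝[>] (1 : ℝ), ∀ᶠ x in atTop,
      l * (1 - f (l⁻¹ * x) / f x) / (l - 1) ≤ x * deriv f x / f x ∧
      x * deriv f x / f x ≤ (f (l * x) / f x - 1) / (l - 1) := by
    filter_upwards [self_mem_nhdsWithin] with l (hl : 1 < l)
    filter_upwards [eventually_gt_atTop 0] with x hx
    have hfd := hdiff.differentiableAt (Ioi_mem_nhds hx)
    exact ⟨hconv.le_mul_deriv_div hfd hx hl (hfpos x hx),
      hconv.mul_deriv_div_le hfd hx hl (hfpos x hx)⟩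
  refine tendsto_of_eventually_squeeze_family hbounds ?_ ?_
    (tendsto_mul_one_sub_inv_rpow_div_sub_one r) (tendsto_rpow_sub_one_div_sub_one r)
  all_goals filter_upwards [self_mem_nhdsWithin] with l (hl : 1 < l)
  · exact (((hreg l⁻¹ (by positivity)).const_sub 1).const_mul l).div_const (l - 1)
  · exact ((hreg l (by linarith)).sub_const 1).div_const (l - 1)

/-- If `f` is regularly varying with index `r > 1`, differentiable with monotone
derivative, then `x f'(x) ∼ r f(x)` as `x → ∞`. -/
theorem stmt_12 (f : ℝ → ℝ) (r : ℝ) (hr : 1 < r)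
    (hfpos : ∀ x > 0, 0 < f x)
    (hreg : ∀ l > 0, Tendsto (fun x => f (l * x) / f x) atTop (nhds (l ^ r)))
    (hdiff : DifferentiableOn ℝ f (Set.Ioi 0))
    (hmono : MonotoneOn (deriv f) (Set.Ioi 0)) :
    Tendsto (fun x => x * deriv f x / f x) atTop (nhds r) :=
  stmt_12_general f r hfpos hreg hdiff hmono
end

section
/- Let f ∈ Γ be differentiable with nondecreasing positive derivative f', and let g = f/f' be its auxiliary function. Then the inverse function f^{-1} is slowly varying, and for every λ > 0, (f^{-1}(λx) − f^{-1}(x))/g(f^{-1}(x)) → ln λ as x → ∞. -/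
open Filter Topology

/-!
Write `z = f⁻¹(x)` and `w = f⁻¹(λx)`, so that `f w = λ f z`. For `exp u < λ < exp v` the defining
limit of `Γ` gives `f (z + u g z) < λ f z < f (z + v g z)` for large `x`, and monotonicity of `f`
traps `(w - z) / g z` between `u` and `v`. Slow variation follows since `g z / z → 0`: for `u < 0`
the point `z + u g z` stays to the right of any bound, as `f` at it is comparable to `f z → ∞`.
-/

/-- `g` is an auxiliary function of `f` in the sense of the class `Γ`. -/
def IsGammaAuxiliary (f g : ℝ → ℝ) : Prop :=
  ∀ u : ℝ, Tendsto (fun x => f (x + u * g x) / f x) atTop (𝓝 (Real.exp u))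

namespace IsGammaAuxiliary

variable {f g : ℝ → ℝ}

theorem tendsto_atTop (hΓ : IsGammaAuxiliary f g) (hf : Monotone f) (hfpos : ∀ x, 0 < f x)
    (hg : ∀ x, 0 ≤ g x) : Tendsto f atTop atTop := by
  refine (tendsto_atTop_of_monotone hf).resolve_right ?_
  rintro ⟨L, hL⟩
  have hL0 : 0 < L := (hfpos 0).trans_le <|
    ge_of_tendsto hL <| (eventually_ge_atTop 0).mono fun x hx => hf hx
  have hshift : Tendsto (fun x => f (x + 1 * g x)) atTop (𝓝 L) :=
    hL.comp <| tendsto_atTop_mono (fun x => by simpa using hg x) tendsto_id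
  have hratio : Real.exp 1 = 1 := by
    simpa [div_self hL0.ne'] using tendsto_nhds_unique (hΓ 1) (hshift.div hL hL0.ne')
  exact one_ne_zero (Real.exp_eq_one_iff 1 |>.1 hratio)

theorem tendsto_add_mul_atTop (hΓ : IsGammaAuxiliary f g) (hf : Monotone f)
    (hfpos : ∀ x, 0 < f x) (hftop : Tendsto f atTop atTop) (u : ℝ) :
    Tendsto (fun x => x + u * g x) atTop atTop := by
  have hcomp : Tendsto (fun x => f (x + u * g x)) atTop atTop := by
    refine ((hΓ u).pos_mul_atTop (Real.exp_pos u) hftop).congr fun x => ?_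
    exact div_mul_cancel₀ _ (hfpos x).ne'
  refine Filter.tendsto_atTop.2 fun M => ?_
  filter_upwards [hcomp.eventually_gt_atTop (f M)] with x hx
  exact (hf.reflect_lt hx).le

theorem tendsto_div_self (hΓ : IsGammaAuxiliary f g) (hf : Monotone f) (hfpos : ∀ x, 0 < f x)
    (hg : ∀ x, 0 ≤ g x) : Tendsto (fun x => g x / x) atTop (𝓝 0) := by
  have hftop := hΓ.tendsto_atTop hf hfpos hg
  refine tendsto_order.2 ⟨fun a ha => ?_, fun b hb => ?_⟩
  · filter_upwards [eventually_gt_atTop 0] with x hx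
    exact ha.trans_le (div_nonneg (hg x) hx.le)
  · filter_upwards [eventually_gt_atTop 0,
      (hΓ.tendsto_add_mul_atTop hf hfpos hftop (-b⁻¹)).eventually_gt_atTop 0] with x hx hpos
    rw [div_lt_iff₀ hx]
    rw [neg_mul, ← div_eq_inv_mul, ← sub_eq_add_neg, sub_pos, div_lt_iff₀ hb] at hpos
    linarith

section Increment

variable {α : Type*} {l : Filter α} {z w : α → ℝ} {c : ℝ}

theorem eventually_add_mul_lt (hΓ : IsGammaAuxiliary f g) (hf : Monotone f)
    (hfpos : ∀ x, 0 < f x) (hz : Tendsto z l atTop) (hw : ∀ᶠ a in l, f (w a) = c * f (z a))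
    {u : ℝ} (hu : Real.exp u < c) : ∀ᶠ a in l, z a + u * g (z a) < w a := by
  filter_upwards [((hΓ u).comp hz).eventually (eventually_lt_nhds hu), hw] with a ha hwa
  refine hf.reflect_lt ?_
  rw [hwa, ← div_lt_iff₀ (hfpos (z a))]
  exact ha

theorem eventually_lt_add_mul (hΓ : IsGammaAuxiliary f g) (hf : Monotone f)
    (hfpos : ∀ x, 0 < f x) (hz : Tendsto z l atTop) (hw : ∀ᶠ a in l, f (w a) = c * f (z a))
    {u : ℝ} (hu : c < Real.exp u) : ∀ᶠ a in l, w a < z a + u * g (z a) := by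
  filter_upwards [((hΓ u).comp hz).eventually (eventually_gt_nhds hu), hw] with a ha hwa
  refine hf.reflect_lt ?_
  rw [hwa, ← lt_div_iff₀ (hfpos (z a))]
  exact ha

theorem tendsto_sub_div_log (hΓ : IsGammaAuxiliary f g) (hf : Monotone f)
    (hfpos : ∀ x, 0 < f x) (hg : ∀ x, 0 < g x) (hz : Tendsto z l atTop)
    (hw : ∀ᶠ a in l, f (w a) = c * f (z a)) (hc : 0 < c) :
    Tendsto (fun a => (w a - z a) / g (z a)) l (𝓝 (Real.log c)) := by
  refine tendsto_order.2 ⟨fun u hu => ?_, fun u hu => ?_⟩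
  · filter_upwards [hΓ.eventually_add_mul_lt hf hfpos hz hw ((Real.lt_log_iff_exp_lt hc).1 hu)]
      with a ha
    rw [lt_div_iff₀ (hg (z a))]
    linarith
  · filter_upwards [hΓ.eventually_lt_add_mul hf hfpos hz hw ((Real.log_lt_iff_lt_exp hc).1 hu)]
      with a ha
    rw [div_lt_iff₀ (hg (z a))]
    linarith

end Increment

end IsGammaAuxiliary

theorem tendsto_div_of_tendsto_sub_div {α : Type*} {l : Filter α} {z w h : α → ℝ} {L : ℝ}
    (hwz : Tendsto (fun a => (w a - z a) / h a) l (𝓝 L))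
    (hhz : Tendsto (fun a => h a / z a) l (𝓝 0)) (hh : ∀ᶠ a in l, h a ≠ 0)
    (hz : ∀ᶠ a in l, z a ≠ 0) : Tendsto (fun a => w a / z a) l (𝓝 1) := by
  have hlim := tendsto_const_nhds (x := (1 : ℝ)).add (hwz.mul hhz)
  rw [mul_zero, add_zero] at hlim
  refine hlim.congr' ?_
  filter_upwards [hh, hz] with a ha hza
  field_simp
  ring

theorem stmt_13_general (f finv : ℝ → ℝ)
    (hfpos : ∀ x, 0 < f x)
    (hf'pos : ∀ x, 0 < deriv f x)
    (hΓ : ∀ u : ℝ, Tendsto (fun x => f (x + u * (f x / deriv f x)) / f x) atTop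
      (nhds (Real.exp u)))
    (hfinv : Tendsto finv atTop atTop)
    (hinv : ∀ᶠ y in atTop, f (finv y) = y) :
    (∀ l > 0, Tendsto (fun x => finv (l * x) / finv x) atTop (nhds 1)) ∧
      (∀ l > 0, Tendsto
        (fun x => (finv (l * x) - finv x) / (f (finv x) / deriv f (finv x)))
        atTop (nhds (Real.log l))) := by
  have hΓ' : IsGammaAuxiliary f (fun x => f x / deriv f x) := hΓ
  have hmono : Monotone f := (strictMono_of_deriv_pos hf'pos).monotone
  have hgpos : ∀ x, 0 < f x / deriv f x := fun x => div_pos (hfpos x) (hf'pos x)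
  have hincr : ∀ l > 0, Tendsto
      (fun x => (finv (l * x) - finv x) / (f (finv x) / deriv f (finv x)))
      atTop (𝓝 (Real.log l)) := by
    intro l hl
    refine hΓ'.tendsto_sub_div_log hmono hfpos hgpos hfinv ?_ hl
    filter_upwards [hinv, (tendsto_id.const_mul_atTop hl).eventually hinv] with x hx hlx
    rw [id_eq] at hlx
    rw [hlx, hx]
  refine ⟨fun l hl => tendsto_div_of_tendsto_sub_div (hincr l hl) ?_ ?_ ?_, hincr⟩
  · exact (hΓ'.tendsto_div_self hmono hfpos fun x => (hgpos x).le).comp hfinv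
  · exact Eventually.of_forall fun x => (hgpos (finv x)).ne'
  · exact (hfinv.eventually_gt_atTop 0).mono fun x hx => hx.ne'

/-- For `f ∈ Γ` with nondecreasing positive derivative and auxiliary function
`g = f/f'`, the inverse `f⁻¹` is slowly varying and
`(f⁻¹(λx) − f⁻¹(x))/g(f⁻¹(x)) → ln λ`. -/
theorem stmt_13 (f finv : ℝ → ℝ)
    (hfpos : ∀ x, 0 < f x)
    (hdiff : Differentiable ℝ f)
    (hf'pos : ∀ x, 0 < deriv f x)
    (hf'mono : Monotone (deriv f))
    (hΓ : ∀ u : ℝ, Tendsto (fun x => f (x + u * (f x / deriv f x)) / f x) atTop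
      (nhds (Real.exp u)))
    (hfinv : Tendsto finv atTop atTop)
    (hinv : ∀ᶠ y in atTop, f (finv y) = y) :
    (∀ l > 0, Tendsto (fun x => finv (l * x) / finv x) atTop (nhds 1)) ∧
      (∀ l > 0, Tendsto
        (fun x => (finv (l * x) - finv x) / (f (finv x) / deriv f (finv x)))
        atTop (nhds (Real.log l))) :=
  stmt_13_general f finv hfpos hf'pos hΓ hfinv hinv
end
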